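/- arXiv:0802.2198 — 6 statements merged into one kernel-verified Lean document; each statement's English description precedes it below -/
import Mathlib

section
/- Suppose C is even under γ and BRST-compatible with s. Then for every n ≥ 1 and every n-multilinear-map-valued function f_n on M_n that is either even or odd with respect to γ, the operators B and b graded-anticommute: (B(b f_n))(x_1,…,x_{n+1}) + (b(B f_n))(x_1,…,x_{n+1}) = 0 for all (x_1,…,x_{n+1}) ∈ M_{n+1}, where b f_n is computed with the even or odd formula according to the parity of f_n, and b(B f_n) with the formula for the opposite parity (since B reverses parity). -/
/-!
Both formulas for `b` are instances of one twisted coboundary `twistedCob C τ`, which puts `τ` on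
the first argument of the outer product: `b = twistedCob C id` on even and `b = -twistedCob C γ`
on odd cochains. Write `B g = s ∘ g ∓ δ g` with `δ g = ∑ᵢ g ∘ (γ ⊗ ⋯ ⊗ γ ⊗ s ⊗ 1 ⊗ ⋯ ⊗ 1)`.
Because `C` is `γ`-even and `s` is a `γ`-twisted derivation of `C`, both `s ∘ -` and `δ` commute
with `twistedCob` up to the two terms in which `s` acts on the outer slot `v₀` or `vₙ`:
`s ∘ b_τ f - b_{γτ} (s ∘ f) = C(s (τ v₀), f) ± C(γ f, s vₙ)` and
`δ (b_τ f) - b_{τγ} (δ f) = C(τ (s v₀), f) ± C(f ∘ γ, s vₙ)`.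
For even `f` (`τ = id`) these agree, and for odd `f` (`τ = γ`) they are opposite because
`γ s = -s γ`; in both cases they cancel in `B (b f) + b (B f)`.
-/

noncomputable section

abbrev Pt (D : ℕ) : Type := EuclideanSpace ℝ (Fin D)

variable {D : ℕ} {V : Type*} [AddCommGroup V] [Module ℂ V]

/-- The chain condition defining the domain `F_m`. -/
def InChain {m : ℕ} (x : Fin m → Pt D) : Prop :=
  ∀ (i : ℕ) (hi : i + 1 < m),
    dist (x ⟨0, by omega⟩) (x ⟨i, by omega⟩) < dist (x ⟨i, by omega⟩) (x ⟨i + 1, hi⟩) ∧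
    ∀ (j : ℕ) (hj : j + 1 ≤ i),
      dist (x ⟨j + 1, by omega⟩) (x ⟨i + 1, hi⟩) < dist (x ⟨j, by omega⟩) (x ⟨i + 1, hi⟩)

def IsBilin (C : Pt D → Pt D → V → V → V) : Prop :=
  ∀ x y : Pt D, (∀ w : V, IsLinearMap ℂ fun u => C x y u w) ∧ (∀ u : V, IsLinearMap ℂ (C x y u))

def AssocF3 (C : Pt D → Pt D → V → V → V) : Prop :=
  ∀ x₁ x₂ x₃ : Pt D, dist x₁ x₂ < dist x₂ x₃ → dist x₂ x₃ < dist x₁ x₃ →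
    ∀ u v w : V, C x₂ x₃ (C x₁ x₂ u v) w = C x₁ x₃ u (C x₂ x₃ v w)

def IsMulti {n : ℕ} (f : (Fin n → Pt D) → (Fin n → V) → V) : Prop :=
  ∀ (x : Fin n → Pt D) (v : Fin n → V) (i : Fin n),
    IsLinearMap ℂ fun u => f x (Function.update v i u)

/-- The Hochschild-type coboundary `b` (even version). -/
def cobE (C : Pt D → Pt D → V → V → V) {n : ℕ}
    (f : (Fin n → Pt D) → (Fin n → V) → V) :
    (Fin (n + 1) → Pt D) → (Fin (n + 1) → V) → V :=
  fun x v =>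
    C (x 0) (x (Fin.last n)) (v 0) (f (fun j => x j.succ) fun j => v j.succ)
      + (∑ k : Fin n, ((-1 : ℂ) ^ ((k : ℕ) + 1)) •
          f (fun j => x (k.castSucc.succAbove j)) fun j =>
            if (j : ℕ) < (k : ℕ) then v j.castSucc
            else if j = k then C (x k.castSucc) (x k.succ) (v k.castSucc) (v k.succ)
            else v j.succ)
      + ((-1 : ℂ) ^ (n + 1)) •
          C (x ⟨n - 1, by omega⟩) (x (Fin.last n))
            (f (fun j => x j.castSucc) fun j => v j.castSucc) (v (Fin.last n))

def gConj (γ : V → V) {n : ℕ} (f : (Fin n → Pt D) → (Fin n → V) → V) :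
    (Fin n → Pt D) → (Fin n → V) → V :=
  fun x v => γ (f x fun j => γ (v j))

def IsEvenC (γ : V → V) {n : ℕ} (f : (Fin n → Pt D) → (Fin n → V) → V) : Prop :=
  ∀ x v, gConj γ f x v = f x v

def IsOddC (γ : V → V) {n : ℕ} (f : (Fin n → Pt D) → (Fin n → V) → V) : Prop :=
  ∀ x v, gConj γ f x v = - f x v

/-- The BRST coboundary `B`. -/
def Bop (γ s : V → V) {n : ℕ} (f : (Fin n → Pt D) → (Fin n → V) → V) :
    (Fin n → Pt D) → (Fin n → V) → V :=
  fun x v =>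
    s (f x v) - ∑ i : Fin n, gConj γ f x fun j =>
      if (j : ℕ) < (i : ℕ) then γ (v j) else if j = i then s (v j) else v j

/-- The Hochschild-type coboundary `b` (odd version). -/
def cobO (C : Pt D → Pt D → V → V → V) (γ : V → V) {n : ℕ}
    (f : (Fin n → Pt D) → (Fin n → V) → V) :
    (Fin (n + 1) → Pt D) → (Fin (n + 1) → V) → V :=
  fun x v =>
    -C (x 0) (x (Fin.last n)) (γ (v 0)) (f (fun j => x j.succ) fun j => v j.succ)
      - (∑ k : Fin n, ((-1 : ℂ) ^ ((k : ℕ) + 1)) •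
          f (fun j => x (k.castSucc.succAbove j)) fun j =>
            if (j : ℕ) < (k : ℕ) then v j.castSucc
            else if j = k then C (x k.castSucc) (x k.succ) (v k.castSucc) (v k.succ)
            else v j.succ)
      - ((-1 : ℂ) ^ (n + 1)) •
          C (x ⟨n - 1, by omega⟩) (x (Fin.last n))
            (f (fun j => x j.castSucc) fun j => v j.castSucc) (v (Fin.last n))

def toC2 (Cj : Pt D → Pt D → V → V → V) : (Fin 2 → Pt D) → (Fin 2 → V) → V :=
  fun x v => Cj (x 0) (x 1) (v 0) (v 1)

def oneC (t : V → V) : (Fin 1 → Pt D) → (Fin 1 → V) → V := fun _ v => t (v 0)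

theorem IsLinearMap.map_sum {R M M₂ : Type*} [Semiring R] [AddCommMonoid M] [AddCommMonoid M₂]
    [Module R M] [Module R M₂] {f : M → M₂} (lin : IsLinearMap R f) {ι : Type*}
    (t : Finset ι) (g : ι → M) : f (∑ i ∈ t, g i) = ∑ i ∈ t, f (g i) :=
  _root_.map_sum (IsLinearMap.mk' f lin) g t

section Slots

variable {α : Type*} (γ s : α → α) {m : ℕ}

def sAt (v : Fin m → α) (i : Fin m) : Fin m → α :=
  fun j => if (j : ℕ) < (i : ℕ) then γ (v j) else if j = i then s (v j) else v j

def twistSum {W : Type*} [AddCommMonoid W] (h : (Fin m → α) → W) (v : Fin m → α) : W :=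
  ∑ i, h (sAt γ s v i)

theorem sAt_self (v : Fin m → α) (i : Fin m) : sAt γ s v i i = s (v i) := by
  simp [sAt]

theorem sAt_succ_zero (v : Fin (m + 1) → α) (j : Fin m) : sAt γ s v j.succ 0 = γ (v 0) := by
  simp [sAt]

theorem tail_sAt_zero (v : Fin (m + 1) → α) : Fin.tail (sAt γ s v 0) = Fin.tail v := by
  funext j
  simp [sAt, Fin.tail, Fin.succ_ne_zero]

theorem tail_sAt_succ (v : Fin (m + 1) → α) (j : Fin m) :
    Fin.tail (sAt γ s v j.succ) = sAt γ s (Fin.tail v) j := by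
  funext i
  simp only [sAt, Fin.tail, Fin.val_succ, add_lt_add_iff_right, Fin.succ_inj]

theorem sAt_castSucc_last (v : Fin (m + 1) → α) (j : Fin m) :
    sAt γ s v j.castSucc (Fin.last m) = v (Fin.last m) := by
  simp [sAt, (Fin.castSucc_lt_last j).ne']

theorem init_sAt_castSucc (v : Fin (m + 1) → α) (j : Fin m) :
    Fin.init (sAt γ s v j.castSucc) = sAt γ s (Fin.init v) j := by
  funext i
  simp only [sAt, Fin.init, Fin.val_castSucc, Fin.castSucc_inj]

theorem init_sAt_last (v : Fin (m + 1) → α) :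
    Fin.init (sAt γ s v (Fin.last m)) = fun j => γ (Fin.init v j) := by
  funext j
  simp [sAt, Fin.init, j.isLt]

theorem sum_sAt_head {W : Type*} [AddCommMonoid W] (P : α → (Fin m → α) → W)
    (v : Fin (m + 1) → α) :
    ∑ i, P (sAt γ s v i 0) (Fin.tail (sAt γ s v i)) =
      P (s (v 0)) (Fin.tail v) + ∑ j, P (γ (v 0)) (sAt γ s (Fin.tail v) j) := by
  simp only [Fin.sum_univ_succ, sAt_self, tail_sAt_zero, sAt_succ_zero, tail_sAt_succ]

theorem sum_sAt_last {W : Type*} [AddCommMonoid W] (P : (Fin m → α) → α → W)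
    (v : Fin (m + 1) → α) :
    ∑ i, P (Fin.init (sAt γ s v i)) (sAt γ s v i (Fin.last m)) =
      ∑ j, P (sAt γ s (Fin.init v) j) (v (Fin.last m))
        + P (fun j => γ (Fin.init v j)) (s (v (Fin.last m))) := by
  simp only [Fin.sum_univ_castSucc, init_sAt_castSucc, sAt_castSucc_last, init_sAt_last, sAt_self]

end Slots

section Merge

variable {α : Type*} (μ : α → α → α) {n : ℕ}

def mergeAt (v : Fin (n + 1) → α) (k : Fin n) : Fin n → α :=
  fun j => if (j : ℕ) < (k : ℕ) then v j.castSucc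
    else if j = k then μ (v k.castSucc) (v k.succ) else v j.succ

variable {μ}

theorem mergeAt_map {γ : α → α} (hμγ : ∀ a b, γ (μ a b) = μ (γ a) (γ b))
    (v : Fin (n + 1) → α) (k : Fin n) :
    mergeAt μ (fun j => γ (v j)) k = fun j => γ (mergeAt μ v k j) := by
  funext j
  simp only [mergeAt]
  split_ifs <;> simp only [hμγ]

variable (γ s : α → α) (v : Fin (n + 1) → α) {j k : Fin n}

theorem sAt_mergeAt_of_lt (h : j < k) :
    sAt γ s (mergeAt μ v k) j = mergeAt μ (sAt γ s v j.castSucc) k := by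
  rw [Fin.lt_def] at h
  funext i
  simp only [sAt, mergeAt, Fin.val_castSucc, Fin.val_succ, Fin.ext_iff]
  split_ifs <;> first | rfl | omega

theorem sAt_mergeAt_of_gt {γ} (hμγ : ∀ a b, γ (μ a b) = μ (γ a) (γ b)) (h : k < j) :
    sAt γ s (mergeAt μ v k) j = mergeAt μ (sAt γ s v j.succ) k := by
  rw [Fin.lt_def] at h
  funext i
  simp only [sAt, mergeAt, Fin.val_castSucc, Fin.val_succ, Fin.ext_iff]
  split_ifs <;> first | rfl | omega | exact hμγ _ _

theorem mergeAt_sAt_castSucc_self :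
    mergeAt μ (sAt γ s v k.castSucc) k =
      Function.update (sAt γ s (mergeAt μ v k) k) k (μ (s (v k.castSucc)) (v k.succ)) := by
  funext i
  simp only [sAt, mergeAt, Function.update_apply, Fin.val_castSucc, Fin.val_succ, Fin.ext_iff]
  split_ifs <;> first | rfl | omega

theorem mergeAt_sAt_succ_self :
    mergeAt μ (sAt γ s v k.succ) k =
      Function.update (sAt γ s (mergeAt μ v k) k) k (μ (γ (v k.castSucc)) (s (v k.succ))) := by
  funext i
  simp only [sAt, mergeAt, Function.update_apply, Fin.val_castSucc, Fin.val_succ, Fin.ext_iff]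
  split_ifs <;> first | rfl | omega

variable {γ s}

/-- Since `s` is a `γ`-twisted derivation of `μ`, the term of the right-hand side with `s` on the
merged slot `k` splits into the two terms of the left-hand side with `s` in slot `k` or `k + 1`. -/
theorem sum_mergeAt_sAt [Add α] {W : Type*} [AddCommMonoid W]
    (hμγ : ∀ a b, γ (μ a b) = μ (γ a) (γ b)) (hμs : ∀ a b, s (μ a b) = μ (s a) b + μ (γ a) (s b))
    (F : (Fin n → α) → W)
    (hF : ∀ u a b, F (Function.update u k (a + b)) =
      F (Function.update u k a) + F (Function.update u k b)) :
    ∑ i, F (mergeAt μ (sAt γ s v i) k) = twistSum γ s F (mergeAt μ v k) := by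
  have hterm : ∀ j, F (sAt γ s (mergeAt μ v k) j) =
      F (mergeAt μ (sAt γ s v (k.succ.succAbove j)) k)
        + if j = k then F (mergeAt μ (sAt γ s v k.succ) k) else 0 := by
    intro j
    rcases lt_trichotomy j k with h | rfl | h
    · rw [Fin.succAbove_of_castSucc_lt _ _ (Fin.castSucc_lt_succ_iff.mpr h.le),
        if_neg h.ne, add_zero, sAt_mergeAt_of_lt γ s v h]
    · rw [if_pos rfl, Fin.succAbove_of_castSucc_lt _ _ Fin.castSucc_lt_succ,
        mergeAt_sAt_castSucc_self, mergeAt_sAt_succ_self, ← hF, ← hμs]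
      exact congrArg F (Function.update_eq_self_iff.mpr (by simp [sAt, mergeAt])).symm
    · rw [Fin.succAbove_of_le_castSucc _ _ (Fin.succ_le_castSucc_iff.mpr h),
        if_neg h.ne', add_zero, sAt_mergeAt_of_gt s v hμγ h]
  rw [twistSum, Fin.sum_univ_succAbove _ k.succ, Finset.sum_congr rfl fun j _ => hterm j,
    Finset.sum_add_distrib, Finset.sum_ite_eq' Finset.univ k, if_pos (Finset.mem_univ k)]
  abel

end Merge

theorem IsBilin.map_add_left {C : Pt D → Pt D → V → V → V} (hC : IsBilin C) (x y : Pt D)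
    (a b w : V) : C x y (a + b) w = C x y a w + C x y b w :=
  ((hC x y).1 w).map_add a b

theorem IsBilin.map_add_right {C : Pt D → Pt D → V → V → V} (hC : IsBilin C) (x y : Pt D)
    (u a b : V) : C x y u (a + b) = C x y u a + C x y u b :=
  ((hC x y).2 u).map_add a b

theorem IsBilin.map_neg_left {C : Pt D → Pt D → V → V → V} (hC : IsBilin C) (x y : Pt D)
    (a w : V) : C x y (-a) w = -C x y a w :=
  ((hC x y).1 w).map_neg a

theorem IsBilin.map_sum_left {C : Pt D → Pt D → V → V → V} (hC : IsBilin C) (x y : Pt D)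
    {ι : Type*} (t : Finset ι) (g : ι → V) (w : V) :
    C x y (∑ i ∈ t, g i) w = ∑ i ∈ t, C x y (g i) w :=
  ((hC x y).1 w).map_sum t g

theorem IsBilin.map_sum_right {C : Pt D → Pt D → V → V → V} (hC : IsBilin C) (x y : Pt D)
    {ι : Type*} (t : Finset ι) (u : V) (g : ι → V) :
    C x y u (∑ i ∈ t, g i) = ∑ i ∈ t, C x y u (g i) :=
  ((hC x y).2 u).map_sum t g

theorem apply_ne_apply_last_of_injective {P : Type*} {n : ℕ} {x : Fin (n + 1) → P}
    (hx : Function.Injective x) {i : Fin (n + 1)} (hi : (i : ℕ) < n) : x i ≠ x (Fin.last n) :=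
  hx.ne fun h => by simp [Fin.ext_iff] at h; omega

theorem Bop_apply {E : Type*} [AddCommGroup E] {γ s : E → E} {m : ℕ}
    (g : (Fin m → Pt D) → (Fin m → E) → E) (x : Fin m → Pt D) (v : Fin m → E) :
    Bop γ s g x v = s (g x v) - twistSum γ s (gConj γ g x) v :=
  rfl

theorem Bop_eq_of_isEvenC {E : Type*} [AddCommGroup E] {γ s : E → E} {m : ℕ}
    {f : (Fin m → Pt D) → (Fin m → E) → E} (hfe : IsEvenC γ f) :
    Bop γ s f = (fun y u => s (f y u)) - fun y => twistSum γ s (f y) := by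
  funext y u
  rw [Bop_apply, show gConj γ f = f from funext fun y => funext (hfe y)]
  rfl

theorem Bop_eq_of_isOddC {E : Type*} [AddCommGroup E] {γ s : E → E} {m : ℕ}
    {f : (Fin m → Pt D) → (Fin m → E) → E} (hfo : IsOddC γ f) :
    Bop γ s f = (fun y u => s (f y u)) + fun y => twistSum γ s (f y) := by
  funext y u
  rw [Bop_apply, show gConj γ f = -f from funext fun y => funext (hfo y)]
  simp only [twistSum, Pi.neg_apply, Finset.sum_neg_distrib, sub_neg_eq_add, Pi.add_apply]

theorem gConj_neg {γ : V → V} (hγ : IsLinearMap ℂ γ) {m : ℕ}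
    (g : (Fin m → Pt D) → (Fin m → V) → V) :
    gConj γ (-g) = -gConj γ g := by
  funext x v
  exact hγ.map_neg _

theorem IsEvenC.apply_map {E : Type*} {γ : E → E} {m : ℕ} {g : (Fin m → Pt D) → (Fin m → E) → E}
    (hg : IsEvenC γ g) (hγγ : ∀ a, γ (γ a) = a) (y : Fin m → Pt D) (u : Fin m → E) :
    g y (fun j => γ (u j)) = γ (g y u) := by
  rw [← hg y u, gConj, hγγ]

theorem IsOddC.apply_map {γ : V → V} {m : ℕ} {g : (Fin m → Pt D) → (Fin m → V) → V}
    (hg : IsOddC γ g) (hγ : IsLinearMap ℂ γ) (hγγ : ∀ a, γ (γ a) = a) (y : Fin m → Pt D)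
    (u : Fin m → V) :
    g y (fun j => γ (u j)) = -γ (g y u) := by
  rw [← hγ.map_neg, ← hg y u, gConj, hγγ]

section Cochain

variable {n : ℕ}

def twistedCob (C : Pt D → Pt D → V → V → V) (τ : V → V)
    (f : (Fin n → Pt D) → (Fin n → V) → V) : (Fin (n + 1) → Pt D) → (Fin (n + 1) → V) → V :=
  fun x v =>
    C (x 0) (x (Fin.last n)) (τ (v 0)) (f (Fin.tail x) (Fin.tail v))
      + (∑ k : Fin n, ((-1 : ℂ) ^ ((k : ℕ) + 1)) •
          f (Fin.removeNth k.castSucc x) (mergeAt (C (x k.castSucc) (x k.succ)) v k))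
      + ((-1 : ℂ) ^ (n + 1)) •
          C (x ⟨n - 1, by omega⟩) (x (Fin.last n)) (f (Fin.init x) (Fin.init v)) (v (Fin.last n))

theorem cobE_eq_twistedCob (C : Pt D → Pt D → V → V → V) (f : (Fin n → Pt D) → (Fin n → V) → V) :
    cobE C f = twistedCob C id f :=
  rfl

theorem cobO_eq_neg_twistedCob (C : Pt D → Pt D → V → V → V) (γ : V → V)
    (f : (Fin n → Pt D) → (Fin n → V) → V) : cobO C γ f = -twistedCob C γ f := by
  funext x v
  show _ - _ - _ = -(_ + _ + _)
  rw [neg_add, neg_add, sub_eq_add_neg, sub_eq_add_neg]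
  rfl

variable {γ s : V → V} {C : Pt D → Pt D → V → V → V}

theorem twistedCob_add (hC : IsBilin C) (τ : V → V) (f g : (Fin n → Pt D) → (Fin n → V) → V) :
    twistedCob C τ (f + g) = twistedCob C τ f + twistedCob C τ g := by
  funext x v
  simp only [twistedCob, Pi.add_apply, IsBilin.map_add_left hC, IsBilin.map_add_right hC, smul_add,
    Finset.sum_add_distrib]
  abel

theorem twistedCob_neg (hC : IsBilin C) (τ : V → V) (f : (Fin n → Pt D) → (Fin n → V) → V) :
    twistedCob C τ (-f) = -twistedCob C τ f :=
  map_neg (AddMonoidHom.mk' (twistedCob C τ) (twistedCob_add hC τ)) f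

theorem twistedCob_sub (hC : IsBilin C) (τ : V → V) (f g : (Fin n → Pt D) → (Fin n → V) → V) :
    twistedCob C τ (f - g) = twistedCob C τ f - twistedCob C τ g :=
  map_sub (AddMonoidHom.mk' (twistedCob C τ) (twistedCob_add hC τ)) f g

variable {x : Fin (n + 1) → Pt D}

theorem gConj_twistedCob (hγ : IsLinearMap ℂ γ) (hγγ : ∀ a, γ (γ a) = a)
    (hCγ : ∀ x₁ x₂ : Pt D, x₁ ≠ x₂ → ∀ a b, γ (C x₁ x₂ a b) = C x₁ x₂ (γ a) (γ b))
    (hx : Function.Injective x) (hn : n ≠ 0) (τ : V → V)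
    (f : (Fin n → Pt D) → (Fin n → V) → V) (u : Fin (n + 1) → V) :
    gConj γ (twistedCob C τ f) x u = twistedCob C (γ ∘ τ ∘ γ) (gConj γ f) x u := by
  have hmerge : ∀ k : Fin n, mergeAt (C (x k.castSucc) (x k.succ)) (fun j => γ (u j)) k =
      fun j => γ (mergeAt (C (x k.castSucc) (x k.succ)) u k j) := fun k =>
    mergeAt_map (hCγ _ _ (hx.ne Fin.castSucc_lt_succ.ne)) u k
  simp only [gConj, twistedCob, hγ.map_add, hγ.map_sum, hγ.map_smul, hmerge, Function.comp,
    hCγ _ _ (apply_ne_apply_last_of_injective hx (i := 0) (Nat.pos_of_ne_zero hn)),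
    hCγ _ _ (apply_ne_apply_last_of_injective hx (i := ⟨n - 1, by omega⟩) (by simp; omega)), hγγ]
  rfl

theorem s_twistedCob_sub (hs : IsLinearMap ℂ s)
    (hBRST : ∀ x₁ x₂ : Pt D, x₁ ≠ x₂ → ∀ u w : V,
      s (C x₁ x₂ u w) = C x₁ x₂ (s u) w + C x₁ x₂ (γ u) (s w))
    (hx : Function.Injective x) (hn : n ≠ 0) (τ : V → V)
    (f : (Fin n → Pt D) → (Fin n → V) → V) (v : Fin (n + 1) → V) :
    s (twistedCob C τ f x v) - twistedCob C (γ ∘ τ) (fun y u => s (f y u)) x v =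
      C (x 0) (x (Fin.last n)) (s (τ (v 0))) (f (Fin.tail x) (Fin.tail v))
        + ((-1 : ℂ) ^ (n + 1)) • C (x ⟨n - 1, by omega⟩) (x (Fin.last n))
            (γ (f (Fin.init x) (Fin.init v))) (s (v (Fin.last n))) := by
  simp only [twistedCob, hs.map_add, hs.map_sum, hs.map_smul, Function.comp, smul_add,
    hBRST _ _ (apply_ne_apply_last_of_injective hx (i := 0) (Nat.pos_of_ne_zero hn)),
    hBRST _ _ (apply_ne_apply_last_of_injective hx (i := ⟨n - 1, by omega⟩) (by simp; omega))]
  abel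

theorem twistSum_twistedCob_sub (hC : IsBilin C)
    (hCγ : ∀ x₁ x₂ : Pt D, x₁ ≠ x₂ → ∀ a b, γ (C x₁ x₂ a b) = C x₁ x₂ (γ a) (γ b))
    (hBRST : ∀ x₁ x₂ : Pt D, x₁ ≠ x₂ → ∀ u w : V,
      s (C x₁ x₂ u w) = C x₁ x₂ (s u) w + C x₁ x₂ (γ u) (s w))
    (hx : Function.Injective x) (τ : V → V)
    (f : (Fin n → Pt D) → (Fin n → V) → V) (hf : IsMulti f) (v : Fin (n + 1) → V) :
    twistSum γ s (twistedCob C τ f x) v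
        - twistedCob C (τ ∘ γ) (fun y => twistSum γ s (f y)) x v =
      C (x 0) (x (Fin.last n)) (τ (s (v 0))) (f (Fin.tail x) (Fin.tail v))
        + ((-1 : ℂ) ^ (n + 1)) • C (x ⟨n - 1, by omega⟩) (x (Fin.last n))
            (f (Fin.init x) fun j => γ (Fin.init v j)) (s (v (Fin.last n))) := by
  have hmerge (k : Fin n) :
      ∑ i, f (Fin.removeNth k.castSucc x) (mergeAt (C (x k.castSucc) (x k.succ)) (sAt γ s v i) k)
        = twistSum γ s (f (Fin.removeNth k.castSucc x))
            (mergeAt (C (x k.castSucc) (x k.succ)) v k) :=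
    have hk := hx.ne (Fin.castSucc_lt_succ (i := k)).ne
    sum_mergeAt_sAt v (hCγ _ _ hk) (hBRST _ _ hk) _ fun u a b => (hf _ u k).map_add a b
  have hhead := sum_sAt_head γ s (fun a u => C (x 0) (x (Fin.last n)) (τ a) (f (Fin.tail x) u)) v
  have hlast := sum_sAt_last γ s
    (fun u a => C (x ⟨n - 1, by omega⟩) (x (Fin.last n)) (f (Fin.init x) u) a) v
  simp only [twistSum, twistedCob, Finset.sum_add_distrib] at hhead hlast hmerge ⊢
  rw [Finset.sum_comm]
  simp only [← Finset.smul_sum, hmerge, hhead, hlast, Function.comp, IsBilin.map_sum_left hC,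
    IsBilin.map_sum_right hC, smul_add]
  abel

theorem gConj_cobE_of_isEvenC (hγ : IsLinearMap ℂ γ) (hγγ : ∀ a, γ (γ a) = a)
    (hCγ : ∀ x₁ x₂ : Pt D, x₁ ≠ x₂ → ∀ a b, γ (C x₁ x₂ a b) = C x₁ x₂ (γ a) (γ b))
    (hx : Function.Injective x) (hn : n ≠ 0) {f : (Fin n → Pt D) → (Fin n → V) → V}
    (hfe : IsEvenC γ f) : gConj γ (cobE C f) x = cobE C f x := by
  funext u
  rw [cobE_eq_twistedCob, gConj_twistedCob hγ hγγ hCγ hx hn, Function.id_comp,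
    show γ ∘ γ = id from funext hγγ, show gConj γ f = f from funext fun y => funext (hfe y)]

theorem gConj_cobO_of_isOddC (hγ : IsLinearMap ℂ γ) (hC : IsBilin C) (hγγ : ∀ a, γ (γ a) = a)
    (hCγ : ∀ x₁ x₂ : Pt D, x₁ ≠ x₂ → ∀ a b, γ (C x₁ x₂ a b) = C x₁ x₂ (γ a) (γ b))
    (hx : Function.Injective x) (hn : n ≠ 0) {f : (Fin n → Pt D) → (Fin n → V) → V}
    (hfo : IsOddC γ f) : gConj γ (cobO C γ f) x = twistedCob C γ f x := by
  funext u
  rw [cobO_eq_neg_twistedCob, gConj_neg hγ, Pi.neg_apply, Pi.neg_apply,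
    gConj_twistedCob hγ hγγ hCγ hx hn, show gConj γ f = -f from funext fun y => funext (hfo y),
    twistedCob_neg hC, ← Function.comp_assoc, show γ ∘ γ = id from funext hγγ, Function.id_comp,
    Pi.neg_apply, Pi.neg_apply, neg_neg]

section Anticommute

variable (hγ : IsLinearMap ℂ γ) (hs : IsLinearMap ℂ s) (hγγ : ∀ a, γ (γ a) = a)
  (hC : IsBilin C)
  (hCγ : ∀ x₁ x₂ : Pt D, x₁ ≠ x₂ → ∀ a b, γ (C x₁ x₂ a b) = C x₁ x₂ (γ a) (γ b))
  (hBRST : ∀ x₁ x₂ : Pt D, x₁ ≠ x₂ → ∀ u w : V,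
    s (C x₁ x₂ u w) = C x₁ x₂ (s u) w + C x₁ x₂ (γ u) (s w))
  (hx : Function.Injective x) (hn : n ≠ 0)
  {f : (Fin n → Pt D) → (Fin n → V) → V} (hf : IsMulti f) (v : Fin (n + 1) → V)
include hγ hs hγγ hC hCγ hBRST hx hn hf

theorem Bop_cobE_add_cobO_Bop (hfe : IsEvenC γ f) :
    Bop γ s (cobE C f) x v + cobO C γ (Bop γ s f) x v = 0 := by
  calc Bop γ s (cobE C f) x v + cobO C γ (Bop γ s f) x v
      = (s (twistedCob C id f x v) - twistedCob C (γ ∘ id) (fun y u => s (f y u)) x v)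
        - (twistSum γ s (twistedCob C id f x) v
          - twistedCob C (id ∘ γ) (fun y => twistSum γ s (f y)) x v) := by
        rw [Bop_apply, gConj_cobE_of_isEvenC hγ hγγ hCγ hx hn hfe, Bop_eq_of_isEvenC hfe,
          cobO_eq_neg_twistedCob, twistedCob_sub hC, cobE_eq_twistedCob]
        simp only [Pi.neg_apply, Pi.sub_apply, Function.comp_id, Function.id_comp]
        abel
    _ = 0 := by
        rw [s_twistedCob_sub hs hBRST hx hn, twistSum_twistedCob_sub hC hCγ hBRST hx _ f hf,
          hfe.apply_map hγγ]
        exact sub_self _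

theorem Bop_cobO_add_cobE_Bop (hγs : ∀ a, γ (s a) + s (γ a) = 0) (hfo : IsOddC γ f) :
    Bop γ s (cobO C γ f) x v + cobE C (Bop γ s f) x v = 0 := by
  calc Bop γ s (cobO C γ f) x v + cobE C (Bop γ s f) x v
      = -((s (twistedCob C γ f x v) - twistedCob C (γ ∘ γ) (fun y u => s (f y u)) x v)
        + (twistSum γ s (twistedCob C γ f x) v
          - twistedCob C (γ ∘ γ) (fun y => twistSum γ s (f y)) x v)) := by
        rw [Bop_apply, gConj_cobO_of_isOddC hγ hC hγγ hCγ hx hn hfo, Bop_eq_of_isOddC hfo,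
          cobO_eq_neg_twistedCob, cobE_eq_twistedCob, twistedCob_add hC,
          show γ ∘ γ = id from funext hγγ]
        simp only [Pi.neg_apply, Pi.add_apply, hs.map_neg]
        abel
    _ = 0 := by
        rw [s_twistedCob_sub hs hBRST hx hn, twistSum_twistedCob_sub hC hCγ hBRST hx _ f hf,
          hfo.apply_map hγ hγγ, eq_neg_of_add_eq_zero_left (hγs (v 0)), IsBilin.map_neg_left hC,
          IsBilin.map_neg_left hC, smul_neg]
        abel

end Anticommute

end Cochain

theorem stmt3_general {D : ℕ} {V : Type*} [AddCommGroup V] [Module ℂ V]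
    (γ s : V → V) (hγ : IsLinearMap ℂ γ) (hs : IsLinearMap ℂ s)
    (hγγ : ∀ v : V, γ (γ v) = v)
    (hγs : ∀ v : V, γ (s v) + s (γ v) = 0)
    (C : Pt D → Pt D → V → V → V) (hbil : IsBilin C)
    (hCeven : ∀ x₁ x₂ : Pt D, x₁ ≠ x₂ → ∀ u w : V, γ (C x₁ x₂ (γ u) (γ w)) = C x₁ x₂ u w)
    (hBRST : ∀ x₁ x₂ : Pt D, x₁ ≠ x₂ → ∀ u w : V,
      s (C x₁ x₂ u w) = C x₁ x₂ (s u) w + C x₁ x₂ (γ u) (s w))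
    (n : ℕ) (hn : 1 ≤ n)
    (f : (Fin n → Pt D) → (Fin n → V) → V) (hf : IsMulti f)
    (x : Fin (n + 1) → Pt D) (hx : Function.Injective x) (v : Fin (n + 1) → V) :
    (IsEvenC γ f → Bop γ s (cobE C f) x v + cobO C γ (Bop γ s f) x v = 0) ∧
    (IsOddC γ f → Bop γ s (cobO C γ f) x v + cobE C (Bop γ s f) x v = 0) := by
  have hCγ (x₁ x₂ : Pt D) (h : x₁ ≠ x₂) (a b : V) : γ (C x₁ x₂ a b) = C x₁ x₂ (γ a) (γ b) := by
    simpa only [hγγ] using hCeven x₁ x₂ h (γ a) (γ b)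
  have hn : n ≠ 0 := by omega
  exact ⟨fun hfe => Bop_cobE_add_cobO_Bop hγ hs hγγ hbil hCγ hBRST hx hn hf v hfe,
    fun hfo => Bop_cobO_add_cobE_Bop hγ hs hγγ hbil hCγ hBRST hx hn hf v hγs hfo⟩

/-- if `C` is even under `γ` and BRST-compatible with `s`, then `B` and `b`
graded-anticommute: `B(b f) + b(B f) = 0` on `M_{n+1}`, where `b f` is computed with the
formula matching the parity of `f`, and `b (B f)` with that of the opposite parity. -/
theorem stmt3 {D : ℕ} (hD : 1 ≤ D) {V : Type*} [AddCommGroup V] [Module ℂ V]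
    (γ s : V → V) (hγ : IsLinearMap ℂ γ) (hs : IsLinearMap ℂ s)
    (hγγ : ∀ v : V, γ (γ v) = v) (hss : ∀ v : V, s (s v) = 0)
    (hγs : ∀ v : V, γ (s v) + s (γ v) = 0)
    (C : Pt D → Pt D → V → V → V) (hbil : IsBilin C)
    (hCeven : ∀ x₁ x₂ : Pt D, x₁ ≠ x₂ → ∀ u w : V, γ (C x₁ x₂ (γ u) (γ w)) = C x₁ x₂ u w)
    (hBRST : ∀ x₁ x₂ : Pt D, x₁ ≠ x₂ → ∀ u w : V,
      s (C x₁ x₂ u w) = C x₁ x₂ (s u) w + C x₁ x₂ (γ u) (s w))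
    (n : ℕ) (hn : 1 ≤ n)
    (f : (Fin n → Pt D) → (Fin n → V) → V) (hf : IsMulti f)
    (hpar : IsEvenC γ f ∨ IsOddC γ f)
    (x : Fin (n + 1) → Pt D) (hx : Function.Injective x) (v : Fin (n + 1) → V) :
    (IsEvenC γ f → Bop γ s (cobE C f) x v + cobO C γ (Bop γ s f) x v = 0) ∧
    (IsOddC γ f → Bop γ s (cobO C γ f) x v + cobE C (Bop γ s f) x v = 0) :=
  stmt3_general γ s hγ hs hγγ hγs C hbil hCeven hBRST n hn f hf x hx v
end
end

section
/- Let D ≥ 2 and let V be a complex Banach space. Suppose C = (C_2, C_3, …) and Ĉ = (Ĉ_2, Ĉ_3, …) are two hierarchies where, for each n ≥ 2, C_n and Ĉ_n are real-analytic functions on M_n with values in the continuous n-multilinear maps V^n → V, and suppose both hierarchies satisfy the factorization property: for every n ≥ 3 and every (x_1,…,x_n) ∈ M_n with r_{1n} > r_{ij} for all 2 ≤ i < j ≤ n, one has C_n(x_1,…,x_n)(v_1,…,v_n) = C_2(x_1,x_n)(v_1, C_{n−1}(x_2,…,x_n)(v_2,…,v_n)) for all v_1,…,v_n ∈ V (and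 the same identity for Ĉ). If C_2 = Ĉ_2 on M_2, then C_n = Ĉ_n on M_n for every n ≥ 2. In particular, the n-point coefficients of such a hierarchy are uniquely determined by the 2-point coefficient. -/
noncomputable section

/-!
Induction on `n`. Where the first point is farther from the last one than any two of the others
are from each other, the factorization property and the induction hypothesis force
`C n = C' n`; such configurations form a nonempty open set. For `D ≥ 2` the space of pairwise
distinct configurations is the complement of finitely many subspaces `{x | x i = x j}` of
codimension `D ≥ 2`, hence connected, so the identity theorem for real-analytic functions
propagates the equality to all of it.
-/

open Set Filter Topology
open scoped Convex

theorem Subspace.exists_forall_notMem {k E ι : Type*} [DivisionRing k] [Infinite k]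
    [AddCommGroup E] [Module k E] [Finite ι] {W : ι → Submodule k E} (hW : ∀ i, W i ≠ ⊤) :
    ∃ x, ∀ i, x ∉ W i := by
  by_contra! hcover
  obtain ⟨i, hi⟩ := Subspace.exists_eq_top_of_iUnion_eq_univ (p := W)
    (eq_univ_of_forall fun x => mem_iUnion.2 (hcover x))
  exact hW i hi

section PathConnected

variable {F : Type*} [AddCommGroup F] [Module ℝ F]

theorem Submodule.segment_subset_compl {W : Submodule ℝ F} {a c : F} (ha : a ∉ W)
    (hc : c ∉ W ⊔ ℝ ∙ a) : [a -[ℝ] c] ⊆ (W : Set F)ᶜ := by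
  rintro _ ⟨s, t, -, -, hst, rfl⟩ hmem
  rcases eq_or_ne t 0 with rfl | ht
  · obtain rfl : s = 1 := by simpa using hst
    exact ha (by simpa using hmem)
  refine hc ((Submodule.smul_mem_iff _ ht).1 ?_)
  have hsa : s • a ∈ W ⊔ ℝ ∙ a :=
    Submodule.mem_sup_right (Submodule.smul_mem _ s (Submodule.mem_span_singleton_self a))
  simpa using Submodule.sub_mem _ (Submodule.mem_sup_left hmem) hsa

variable [TopologicalSpace F] [ContinuousAdd F] [ContinuousSMul ℝ F]

/-- `W i ⊔ ℝ ∙ a ≠ ⊤` for all `a` says that `W i` has codimension at least two. -/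
theorem isPathConnected_setOf_forall_notMem {ι : Type*} [Finite ι] {W : ι → Submodule ℝ F}
    (hW : ∀ i a, W i ⊔ ℝ ∙ a ≠ ⊤) : IsPathConnected {x | ∀ i, x ∉ W i} := by
  have join : ∀ a ∈ {x | ∀ i, x ∉ W i}, ∀ c, (∀ i, c ∉ W i ⊔ ℝ ∙ a) →
      JoinedIn {x | ∀ i, x ∉ W i} a c := fun a ha c hc =>
    .of_segment_subset fun z hz i => Submodule.segment_subset_compl (ha i) (hc i) hz
  obtain ⟨x₀, hx₀⟩ := Subspace.exists_forall_notMem fun i => by simpa using hW i 0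
  refine ⟨x₀, hx₀, fun b hb => ?_⟩
  obtain ⟨c, hc⟩ := Subspace.exists_forall_notMem (W := fun p : ι × Bool =>
    W p.1 ⊔ ℝ ∙ (if p.2 then x₀ else b)) fun p => hW _ _
  exact (join x₀ hx₀ c (hc ⟨·, true⟩)).trans (join b hb c (hc ⟨·, false⟩)).symm

end PathConnected

section Configurations

variable {ι : Type*}

theorem isOpen_setOf_injective {E : Type*} [TopologicalSpace E] [T2Space E] [Finite ι] :
    IsOpen {x : ι → E | Function.Injective x} := by
  have : {x : ι → E | Function.Injective x} = ⋂ i, ⋂ j, {x | x i = x j → i = j} := by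
    ext; simp [Function.Injective]
  rw [this]
  refine isOpen_iInter_of_finite fun i => isOpen_iInter_of_finite fun j => ?_
  by_cases hij : i = j
  · simp [hij]
  · simpa [hij] using isOpen_ne_fun (continuous_apply i) (continuous_apply j)

variable (R E : Type*) [Semiring R] [AddCommGroup E] [Module R E]

def collisionSubspace (i j : ι) : Submodule R (ι → E) :=
  LinearMap.eqLocus (LinearMap.proj i) (LinearMap.proj j)

variable {R E}

theorem mem_collisionSubspace {i j : ι} {x : ι → E} :
    x ∈ collisionSubspace R E i j ↔ x i = x j :=
  Iff.rfl

variable [Module ℝ E]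

theorem collisionSubspace_sup_span_singleton_ne_top (hE : 1 < Module.rank ℝ E) {i j : ι}
    (hij : i ≠ j) (a : ι → E) : collisionSubspace ℝ E i j ⊔ ℝ ∙ a ≠ ⊤ := by
  classical
  intro htop
  refine hE.not_ge (rank_le_one_iff.2 ⟨a i - a j, fun v => ?_⟩)
  obtain ⟨y, hy, z, hz, hyz⟩ := Submodule.mem_sup.1 (htop ▸ Submodule.mem_top :
    Pi.single i v ∈ collisionSubspace ℝ E i j ⊔ ℝ ∙ a)
  obtain ⟨r, rfl⟩ := Submodule.mem_span_singleton.1 hz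
  refine ⟨r, ?_⟩
  have hi := congrFun hyz i
  have hj := congrFun hyz j
  rw [mem_collisionSubspace] at hy
  simp [hij.symm] at hi hj
  linear_combination (norm := module) hi - hj - hy

theorem isPathConnected_setOf_injective [TopologicalSpace E] [ContinuousAdd E]
    [ContinuousSMul ℝ E] [Finite ι] (hE : 1 < Module.rank ℝ E) :
    IsPathConnected {x : ι → E | Function.Injective x} := by
  have : {x : ι → E | Function.Injective x} =
      {x | ∀ p : {p : ι × ι // p.1 ≠ p.2}, x ∉ collisionSubspace ℝ E p.1.1 p.1.2} := by
    ext x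
    simp [Function.Injective, mem_collisionSubspace, not_imp_not]
  rw [this]
  exact isPathConnected_setOf_forall_notMem fun p =>
    collisionSubspace_sup_span_singleton_ne_top hE p.2

end Configurations

section FarFirst

variable {E : Type*} [NormedAddCommGroup E] [NormedSpace ℝ E] [Nontrivial E]

theorem exists_eventually_injective_farFirst (m : ℕ) :
    ∃ z₀ : Fin (m + 1) → E, ∀ᶠ z in 𝓝 z₀, Function.Injective z ∧
      ∀ i j : Fin (m + 1), 1 ≤ (i : ℕ) → (i : ℕ) < j →
        dist (z i) (z j) < dist (z 0) (z (Fin.last m)) := by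
  -- the points `k² • e` on a line: for `1 ≤ i < j ≤ m`, `j² - i² < m²`
  obtain ⟨e, he⟩ := exists_norm_eq E zero_le_one
  have hdist : ∀ k l : Fin (m + 1), dist (((k : ℝ) ^ 2) • e) (((l : ℝ) ^ 2) • e) =
      |(k : ℝ) ^ 2 - (l : ℝ) ^ 2| := fun k l => by
    rw [dist_eq_norm, ← sub_smul, norm_smul, he, mul_one, Real.norm_eq_abs]
  have hinj : Function.Injective fun k : Fin (m + 1) => ((k : ℝ) ^ 2) • e := fun k l hkl => by
    have : ((k : ℕ) : ℝ) ^ 2 = ((l : ℕ) : ℝ) ^ 2 := by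
      simpa [hdist, sub_eq_zero] using dist_eq_zero.2 hkl
    norm_cast at this
    exact Fin.ext (Nat.pow_left_injective two_ne_zero this)
  refine ⟨_, (isOpen_setOf_injective.eventually_mem hinj).and ?_⟩
  simp only [eventually_all]
  intro i j hi hij
  refine ContinuousAt.eventually_lt (f := fun z : Fin (m + 1) → E => dist (z i) (z j))
    (g := fun z => dist (z 0) (z (Fin.last m))) (by fun_prop) (by fun_prop) ?_
  have hi' : (1 : ℝ) ≤ i := by exact_mod_cast hi
  have hij' : (i : ℝ) < j := by exact_mod_cast hij
  have hjm : (j : ℝ) ≤ m := by exact_mod_cast Nat.lt_succ_iff.1 j.isLt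
  rw [hdist, hdist, Fin.val_zero, Fin.val_last, Nat.cast_zero, zero_pow two_ne_zero, zero_sub,
    abs_neg, abs_sq, abs_sub_lt_iff]
  constructor <;> nlinarith

end FarFirst

/-- a real-analytic hierarchy of OPE coefficients satisfying the factorization
property is uniquely determined by its 2-point coefficient. -/
theorem stmt7 {D : ℕ} (hD : 2 ≤ D) {V : Type*} [NormedAddCommGroup V] [NormedSpace ℂ V]
    (C C' : (n : ℕ) → (Fin n → Pt D) → ContinuousMultilinearMap ℂ (fun _ : Fin n => V) V)
    (hCa : ∀ n, 2 ≤ n → AnalyticOnNhd ℝ (C n) {x | Function.Injective x})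
    (hC'a : ∀ n, 2 ≤ n → AnalyticOnNhd ℝ (C' n) {x | Function.Injective x})
    (hCfac : ∀ n, ∀ hn : 3 ≤ n, ∀ x : Fin n → Pt D, Function.Injective x →
      (∀ i j : Fin n, 1 ≤ (i : ℕ) → (i : ℕ) < (j : ℕ) →
        dist (x i) (x j) < dist (x ⟨0, by omega⟩) (x ⟨n - 1, by omega⟩)) →
      ∀ v : Fin n → V,
        C n x v = C 2 ![x ⟨0, by omega⟩, x ⟨n - 1, by omega⟩]
          ![v ⟨0, by omega⟩,
            C (n - 1) (fun j => x ⟨(j : ℕ) + 1, by have := j.isLt; omega⟩)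
              (fun j => v ⟨(j : ℕ) + 1, by have := j.isLt; omega⟩)])
    (hC'fac : ∀ n, ∀ hn : 3 ≤ n, ∀ x : Fin n → Pt D, Function.Injective x →
      (∀ i j : Fin n, 1 ≤ (i : ℕ) → (i : ℕ) < (j : ℕ) →
        dist (x i) (x j) < dist (x ⟨0, by omega⟩) (x ⟨n - 1, by omega⟩)) →
      ∀ v : Fin n → V,
        C' n x v = C' 2 ![x ⟨0, by omega⟩, x ⟨n - 1, by omega⟩]
          ![v ⟨0, by omega⟩,
            C' (n - 1) (fun j => x ⟨(j : ℕ) + 1, by have := j.isLt; omega⟩)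
              (fun j => v ⟨(j : ℕ) + 1, by have := j.isLt; omega⟩)])
    (h2 : ∀ x : Fin 2 → Pt D, Function.Injective x → C 2 x = C' 2 x)
    (n : ℕ) (hn : 2 ≤ n) (x : Fin n → Pt D) (hx : Function.Injective x) :
    C n x = C' n x := by
  induction n, hn using Nat.le_induction with
  | base => exact h2 x hx
  | succ m hm IH =>
    have hrank : 1 < Module.rank ℝ (Pt D) := by
      rw [← Module.finrank_eq_rank, finrank_euclideanSpace_fin]
      exact_mod_cast hD
    have : Nontrivial (Pt D) := rank_pos_iff_nontrivial.1 (zero_lt_one.trans hrank)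
    have hconn : IsPreconnected {z : Fin (m + 1) → Pt D | Function.Injective z} :=
      (isPathConnected_setOf_injective hrank).isConnected.isPreconnected
    obtain ⟨z₀, hfar⟩ := exists_eventually_injective_farFirst (E := Pt D) m
    refine (hCa _ (by omega)).eqOn_of_preconnected_of_eventuallyEq (hC'a _ (by omega)) hconn
      hfar.self_of_nhds.1
      (hfar.mono fun z ⟨hz, hsep⟩ => ContinuousMultilinearMap.ext fun v => ?_) hx
    have htail : C (m + 1 - 1) (fun j => z ⟨j + 1, by omega⟩) =
        C' (m + 1 - 1) (fun j => z ⟨j + 1, by omega⟩) :=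
      IH _ (hz.comp fun a b hab => Fin.ext (by simpa using congrArg Fin.val hab))
    have hends : Function.Injective ![z ⟨0, by omega⟩, z ⟨m + 1 - 1, by omega⟩] :=
      injective_pair_iff_ne.2 (hz.ne (Fin.ne_of_val_ne (show 0 ≠ m + 1 - 1 by omega)))
    -- `hsep` uses `0` and `Fin.last m`, which are `⟨0, _⟩` and `⟨m + 1 - 1, _⟩` up to defeq
    rw [hCfac _ (by omega) z hz hsep v, hC'fac _ (by omega) z hz hsep v, htail, h2 _ hends]
end
end

section
/- Let A be an associative algebra over ℂ with product m_0(A,B) = A·B, let i ≥ 1, and let m_1,…,m_{i−1} : A × A → A be bilinear maps. For 1 ≤ j ≤ i define the trilinear map w_j(A,B,C) := −Σ_{k=1}^{j−1} [ m_{j−k}(A, m_k(B,C)) − m_{j−k}(m_k(A,B), C) ] (so w_1 = 0). Suppose for each 1 ≤ j ≤ i−1 the j-th order deformation equation holds: A·m_j(B,C) − m_j(A·B, C) + m_j(A, B·C) − m_j(A,B)·C = w_j(A,B,C) for all A, B, C ∈ A (i.e. d m_j = w_j for the Hochschild coboundary d). Then d w_i = 0, i.e. w_i is a Hochschild 3-cocycle: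 A_1·w_i(A_2,A_3,A_4) − w_i(A_1·A_2, A_3, A_4) + w_i(A_1, A_2·A_3, A_4) − w_i(A_1, A_2, A_3·A_4) + w_i(A_1,A_2,A_3)·A_4 = 0 for all A_1,…,A_4 ∈ A. In particular, the obstruction to extending an order-(i−1) formal associative deformation of A to order i is a Hochschild 3-cocycle. -/
/-- The inhomogeneity `w_j(A,B,C) = −Σ_{k=1}^{j−1} [ m_{j−k}(A, m_k(B,C)) − m_{j−k}(m_k(A,B), C) ]`
built from the lower order deformations of the product. -/
def wDef {A : Type*} [Ring A] [Algebra ℂ A] (ms : ℕ → A → A → A) (j : ℕ) (a b c : A) : A :=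
  - ∑ k ∈ Finset.Ioo 0 j, (ms (j - k) a (ms k b c) - ms (j - k) (ms k a b) c)

/-!
Put `μ_0 = ·`, `μ_k = m_k` for `0 < k < i` and `μ_k = 0` for `k ≥ i`, and let `Φ_k` be the
coefficient of `t^k` in the associator of the formal product `μ_t = Σ t^k μ_k`. The associator of
any biadditive product `μ_t` satisfies `μ_t(a, Φ_t(b,c,d)) − Φ_t(μ_t(a,b),c,d) + Φ_t(a,μ_t(b,c),d)
− Φ_t(a,b,μ_t(c,d)) + μ_t(Φ_t(a,b,c),d) = 0`: after expanding, the ten kinds of terms cancel in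
pairs. For `0 < k`, `Φ_k = w_k − d μ_k`, so the deformation equations say `Φ_k = 0` for `k < i`,
while `Φ_i = w_i` because `μ_i = 0`. The coefficient of `t^i` of the identity is then `d w_i = 0`.
-/

open Finset

theorem Finset.Nat.sum_antidiagonal_antidiagonal_fst {M : Type*} [AddCommMonoid M] (i : ℕ)
    (f : ℕ → ℕ → ℕ → M) :
    ∑ p ∈ antidiagonal i, ∑ q ∈ antidiagonal p.1, f q.1 q.2 p.2 =
      ∑ p ∈ antidiagonal i, ∑ q ∈ antidiagonal p.2, f p.1 q.1 q.2 := by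
  simp only [sum_sigma']
  apply sum_nbij' (fun ⟨⟨_, c⟩, ⟨a, b⟩⟩ ↦ ⟨(a, b + c), (b, c)⟩)
    (fun ⟨⟨a, _⟩, ⟨b, c⟩⟩ ↦ ⟨(a + b, c), (a, b)⟩) <;> aesop (add simp [add_assoc])

theorem Finset.Nat.sum_antidiagonal_eq_apply_zero_self {M : Type*} [AddCommMonoid M] {i : ℕ}
    {f : ℕ × ℕ → M} (h : ∀ p ∈ antidiagonal i, p.2 < i → f p = 0) :
    ∑ p ∈ antidiagonal i, f p = f (0, i) := by
  refine sum_eq_single_of_mem (0, i) (by simp) fun p hp hne => h p hp ?_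
  rw [HasAntidiagonal.mem_antidiagonal] at hp
  exact lt_of_le_of_ne (by omega) fun h2 => hne (Prod.ext (by omega) h2)

theorem Finset.Nat.sum_antidiagonal_eq_apply_self_zero {M : Type*} [AddCommMonoid M] {i : ℕ}
    {f : ℕ × ℕ → M} (h : ∀ p ∈ antidiagonal i, p.1 < i → f p = 0) :
    ∑ p ∈ antidiagonal i, f p = f (i, 0) := by
  rw [← Nat.sum_antidiagonal_swap]
  exact Nat.sum_antidiagonal_eq_apply_zero_self fun p hp => h p.swap (by simpa [add_comm] using hp)

theorem Finset.range_succ_eq_insert_insert_Ioo {k : ℕ} (hk : 0 < k) :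
    range (k + 1) = insert k (insert 0 (Ioo 0 k)) := by
  rw [Nat.range_succ_eq_Icc_zero, ← Ico_insert_right (Nat.zero_le k), Ioo_insert_left hk]

def AddMonoidHom.mk₂ {M : Type*} [AddCommGroup M] (f : M → M → M)
    (hl : ∀ a a' b, f (a + a') b = f a b + f a' b) (hr : ∀ a b b', f a (b + b') = f a b + f a b') :
    M →+ M →+ M :=
  AddMonoidHom.mk' (fun a => AddMonoidHom.mk' (f a) (hr a)) fun a a' => AddMonoidHom.ext (hl a a')

@[simp]
theorem AddMonoidHom.mk₂_apply {M : Type*} [AddCommGroup M] (f : M → M → M) (hl) (hr) (a b : M) :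
    AddMonoidHom.mk₂ f hl hr a b = f a b := rfl

section GradedAssociator

variable {M : Type*} [AddCommGroup M] (μ : ℕ → M →+ M →+ M)

def gradedAssociator (k : ℕ) (x y z : M) : M :=
  ∑ p ∈ antidiagonal k, (μ p.1 (μ p.2 x y) z - μ p.1 x (μ p.2 y z))

def hochschildCoboundary₃ (m : M →+ M →+ M) (ψ : M → M → M → M) (a b c d : M) : M :=
  m a (ψ b c d) - ψ (m a b) c d + ψ a (m b c) d - ψ a b (m c d) + m (ψ a b c) d

theorem sum_antidiagonal_gradedAssociator (i : ℕ) (a b c d : M) :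
    ∑ p ∈ antidiagonal i,
      (μ p.1 a (gradedAssociator μ p.2 b c d) - gradedAssociator μ p.1 (μ p.2 a b) c d
        + gradedAssociator μ p.1 a (μ p.2 b c) d - gradedAssociator μ p.1 a b (μ p.2 c d)
        + μ p.1 (gradedAssociator μ p.2 a b c) d) = 0 := by
  simp only [gradedAssociator, map_sum, map_sub, AddMonoidHom.finsetSum_apply,
    AddMonoidHom.sub_apply, sum_add_distrib, sum_sub_distrib]
  rw [Nat.sum_antidiagonal_antidiagonal_fst i fun u v w => μ u (μ v (μ w a b) c) d,
    Nat.sum_antidiagonal_antidiagonal_fst i fun u v w => μ u (μ w a b) (μ v c d),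
    Nat.sum_antidiagonal_antidiagonal_fst i fun u v w => μ u (μ v a (μ w b c)) d,
    Nat.sum_antidiagonal_antidiagonal_fst i fun u v w => μ u a (μ v (μ w b c) d),
    Nat.sum_antidiagonal_antidiagonal_fst i fun u v w => μ u (μ v a b) (μ w c d),
    Nat.sum_antidiagonal_antidiagonal_fst i fun u v w => μ u a (μ v b (μ w c d))]
  have swap : ∑ p ∈ antidiagonal i, ∑ q ∈ antidiagonal p.2, μ p.1 (μ q.2 a b) (μ q.1 c d) =
      ∑ p ∈ antidiagonal i, ∑ q ∈ antidiagonal p.2, μ p.1 (μ q.1 a b) (μ q.2 c d) :=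
    sum_congr rfl fun p _ => Nat.sum_antidiagonal_swap (f := fun q => μ p.1 (μ q.1 a b) (μ q.2 c d))
  rw [swap]
  abel

theorem hochschildCoboundary₃_gradedAssociator {i : ℕ} (h : ∀ k < i, gradedAssociator μ k = 0)
    (a b c d : M) : hochschildCoboundary₃ (μ 0) (gradedAssociator μ i) a b c d = 0 := by
  rw [← sum_antidiagonal_gradedAssociator μ i a b c d]
  simp only [sum_add_distrib, sum_sub_distrib]
  rw [Nat.sum_antidiagonal_eq_apply_zero_self, Nat.sum_antidiagonal_eq_apply_self_zero,
    Nat.sum_antidiagonal_eq_apply_self_zero, Nat.sum_antidiagonal_eq_apply_self_zero,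
    Nat.sum_antidiagonal_eq_apply_zero_self]
  · rfl
  all_goals intro p _ hp; simp [h _ hp]

theorem gradedAssociator_eq_of_pos {k : ℕ} (hk : 0 < k) (x y z : M) :
    gradedAssociator μ k x y z =
      μ 0 (μ k x y) z - μ 0 x (μ k y z) + (μ k (μ 0 x y) z - μ k x (μ 0 y z))
        + ∑ t ∈ Ioo 0 k, (μ (k - t) (μ t x y) z - μ (k - t) x (μ t y z)) := by
  rw [gradedAssociator, ← Nat.sum_antidiagonal_swap, Nat.sum_antidiagonal_eq_sum_range_succ_mk,
    range_succ_eq_insert_insert_Ioo hk, sum_insert (by simp; omega), sum_insert (by simp)]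
  simp [add_assoc, sum_sub_distrib]

end GradedAssociator

section Deformation

variable {A : Type*} [Ring A] [Algebra ℂ A]

theorem wDef_congr {ms ms' : ℕ → A → A → A} {k : ℕ} (h : ∀ j, 0 < j → j < k → ms j = ms' j) :
    wDef ms k = wDef ms' k := by
  funext a b c
  refine congrArg Neg.neg (sum_congr rfl fun j hj => ?_)
  rw [mem_Ioo] at hj
  rw [h j hj.1 hj.2, h (k - j) (by omega) (by omega)]

theorem gradedAssociator_eq_wDef_sub (μ : ℕ → A →+ A →+ A) (hμ0 : μ 0 = AddMonoidHom.mul) {k : ℕ}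
    (hk : 0 < k) (x y z : A) :
    gradedAssociator μ k x y z = wDef (fun j a b => μ j a b) k x y z
      - (x * μ k y z - μ k (x * y) z + μ k x (y * z) - μ k x y * z) := by
  rw [gradedAssociator_eq_of_pos μ hk, hμ0, wDef]
  simp only [AddMonoidHom.mul_apply, sum_sub_distrib]
  abel

theorem hochschildCoboundary₃_wDef (μ : ℕ → A →+ A →+ A) {i : ℕ} (hi : 1 ≤ i)
    (hμ0 : μ 0 = AddMonoidHom.mul) (hμi : μ i = 0)
    (hdef : ∀ k, 1 ≤ k → k < i → ∀ a b c : A, a * μ k b c - μ k (a * b) c + μ k a (b * c)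
      - μ k a b * c = wDef (fun j a b => μ j a b) k a b c) (a b c d : A) :
    hochschildCoboundary₃ AddMonoidHom.mul (wDef (fun j a b => μ j a b) i) a b c d = 0 := by
  have hlow : ∀ k < i, gradedAssociator μ k = 0 := by
    intro k hki
    funext x y z
    rcases k.eq_zero_or_pos with rfl | hk
    · simp [gradedAssociator, hμ0, mul_assoc]
    · rw [gradedAssociator_eq_wDef_sub μ hμ0 hk, hdef k hk hki, sub_self]
      rfl
  have htop : gradedAssociator μ i = wDef (fun j a b => μ j a b) i := by
    funext x y z
    simp [gradedAssociator_eq_wDef_sub μ hμ0 hi, hμi]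
  rw [← hμ0, ← htop]
  exact hochschildCoboundary₃_gradedAssociator μ hlow a b c d

end Deformation

/-- if the deformation equations `d m_j = w_j` hold for `1 ≤ j ≤ i−1`, then
`w_i` is a Hochschild 3-cocycle, `d w_i = 0`; i.e. the obstruction to extending an
order-`(i−1)` formal associative deformation to order `i` is a Hochschild 3-cocycle. -/
theorem stmt10 {A : Type*} [Ring A] [Algebra ℂ A]
    (i : ℕ) (hi : 1 ≤ i)
    (ms : ℕ → A → A → A)
    (hbil : ∀ j, 1 ≤ j → j < i →
      (∀ b : A, IsLinearMap ℂ fun a => ms j a b) ∧ (∀ a : A, IsLinearMap ℂ (ms j a)))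
    (hdef : ∀ j, 1 ≤ j → j < i → ∀ a b c : A,
      a * ms j b c - ms j (a * b) c + ms j a (b * c) - ms j a b * c = wDef ms j a b c)
    (a₁ a₂ a₃ a₄ : A) :
    a₁ * wDef ms i a₂ a₃ a₄ - wDef ms i (a₁ * a₂) a₃ a₄ + wDef ms i a₁ (a₂ * a₃) a₄
      - wDef ms i a₁ a₂ (a₃ * a₄) + wDef ms i a₁ a₂ a₃ * a₄ = 0 := by
  let μ : ℕ → A →+ A →+ A := fun k =>
    if hk : k = 0 then AddMonoidHom.mul
    else if hki : k < i then
      AddMonoidHom.mk₂ (ms k) (fun a a' b => ((hbil k (by omega) hki).1 b).map_add a a')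
        fun a => ((hbil k (by omega) hki).2 a).map_add
    else 0
  have hμ : ∀ k, 0 < k → k < i → ∀ a b, μ k a b = ms k a b := by
    intro k hk hki a b
    simp [μ, hk.ne', hki]
  have hw : ∀ k ≤ i, wDef (fun j a b => μ j a b) k = wDef ms k := fun k hk =>
    wDef_congr fun j hj hjk => funext₂ (hμ j hj (by omega))
  have := hochschildCoboundary₃_wDef μ hi (by simp [μ]) (by simp [μ]; omega)
    (fun k hk hki a b c => by simpa only [hw k hki.le, hμ k hk hki] using hdef k hk hki a b c)
    a₁ a₂ a₃ a₄
  rwa [hw i le_rfl] at this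
end

section
/- Let D ≥ 1, l ∈ ℕ, j ∈ ℕ, and let k be a real number with k ≠ l − 2 and k ≠ −l − D. Then there exists a real polynomial p of degree exactly j such that for every harmonic polynomial h on ℝ^D homogeneous of degree l and every x ∈ ℝ^D with x ≠ 0: Δ( h(x)·|x|^{k+2−l}·p(log|x|) ) = h(x)·|x|^{k−l}·(log|x|)^j, where Δ denotes the Euclidean Laplacian Σ_{μ=1}^D ∂²/∂x_μ². -/
noncomputable section

/-- The Euclidean Laplacian `Δf = Σ_μ ∂²f/∂x_μ²` on `ℝ^D`. -/
def lap {D : ℕ} (f : EuclideanSpace ℝ (Fin D) → ℝ) (x : EuclideanSpace ℝ (Fin D)) : ℝ :=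
  ∑ μ : Fin D,
    fderiv ℝ (fun y => fderiv ℝ f y (EuclideanSpace.single μ 1)) x (EuclideanSpace.single μ 1)

/-- `h` is a harmonic polynomial on `ℝ^D`, homogeneous of degree `l`. -/
def IsHarmHom {D : ℕ} (l : ℕ) (h : EuclideanSpace ℝ (Fin D) → ℝ) : Prop :=
  (∃ p : MvPolynomial (Fin D) ℝ, ∀ x, h x = MvPolynomial.eval (fun μ => x μ) p) ∧
  (∀ t : ℝ, 0 < t → ∀ x, h (t • x) = t ^ l * h x) ∧
  (∀ x, lap h x = 0)

/-!
Write `a = k + 2 - l` and `b = a + 2l + D - 2 = k + l + D`. For `h` harmonic and homogeneous of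
degree `l` and a radial factor `φ(|x|)`, the product rule together with Euler's identity
`x · ∇h = l h` gives `Δ(h φ) = h (φ'' + (2l + D - 1) φ' / r)`. For `φ(r) = r^a P(log r)` this is
`h r^(a-2) (T P)(log r)` with `T P = a b P + (a + b) P' + P''`. Since `k ≠ l - 2` and
`k ≠ -l - D` mean `a b ≠ 0`, `T` preserves degrees; hence it is injective, and therefore
bijective, on each finite-dimensional space of polynomials of bounded degree, and `P = T⁻¹ X^j`
has degree `j`.
-/

open Polynomial Real

namespace Polynomial

/-- `r d/dr (r^c S(log r)) = r^c (eulerShift c S)(log r)`. -/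
def eulerShift {R : Type*} [CommRing R] (c : R) (S : R[X]) : R[X] := C c * S + derivative S

theorem eulerShift_eulerShift {R : Type*} [CommRing R] (a b : R) (P : R[X]) :
    eulerShift b (eulerShift a P) =
      C (a * b) * P + C (a + b) * derivative P + derivative (derivative P) := by
  simp only [eulerShift, derivative_add, derivative_C_mul, C_mul, C_add]
  ring

section Field

variable {K : Type*} [Field K]

theorem degree_C_mul_add_C_mul_derivative_add_derivative {α : K} (hα : α ≠ 0) (β : K)
    (P : K[X]) :
    (C α * P + C β * derivative P + derivative (derivative P)).degree = P.degree := by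
  rcases eq_or_ne P 0 with rfl | hP
  · simp
  have hlt : (C β * derivative P + derivative (derivative P)).degree < (C α * P).degree := by
    rw [degree_C_mul hα]
    refine (degree_add_le _ _).trans_lt (max_lt ?_ ?_)
    · rw [← smul_eq_C_mul]
      exact (degree_smul_le _ _).trans_lt (degree_derivative_lt hP)
    · exact degree_derivative_le.trans_lt (degree_derivative_lt hP)
  rw [add_assoc, degree_add_eq_left_of_degree_lt hlt, degree_C_mul hα]

theorem exists_C_mul_add_C_mul_derivative_add_derivative_eq {α : K} (hα : α ≠ 0) (β : K)
    (q : K[X]) : ∃ P : K[X], C α * P + C β * derivative P + derivative (derivative P) = q := by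
  let L : K[X] →ₗ[K] K[X] :=
    { toFun := fun P => C α * P + C β * derivative P + derivative (derivative P)
      map_add' := fun P Q => by simp only [derivative_add]; ring
      map_smul' := fun c P => by
        simp only [smul_eq_C_mul, derivative_C_mul, RingHom.id_apply]
        ring }
  have hdeg (P : K[X]) : (L P).degree = P.degree :=
    degree_C_mul_add_C_mul_derivative_add_derivative hα β P
  let n := q.natDegree + 1
  have : FiniteDimensional K (degreeLT K n) := (degreeLTEquiv K n).symm.finiteDimensional
  let Ln := L.restrict (p := degreeLT K n) (q := degreeLT K n)
    fun P hP => by rw [mem_degreeLT, hdeg]; exact mem_degreeLT.1 hP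
  have hinj : Function.Injective Ln := by
    refine (injective_iff_map_eq_zero Ln).2 fun P hP => Subtype.ext ?_
    have hLP : L P = 0 := congrArg Subtype.val hP
    simpa [hLP] using (hdeg P).symm
  have hq : q ∈ degreeLT K n :=
    mem_degreeLT.2 <| degree_le_natDegree.trans_lt <| by exact_mod_cast q.natDegree.lt_succ_self
  obtain ⟨P, hP⟩ := LinearMap.injective_iff_surjective.1 hinj ⟨q, hq⟩
  exact ⟨P, congrArg Subtype.val hP⟩

end Field

end Polynomial

def logPolyRadial {F : Type*} [Norm F] (c : ℝ) (S : ℝ[X]) (y : F) : ℝ :=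
  ‖y‖ ^ c * S.eval (Real.log ‖y‖)

theorem norm_sq_mul_logPolyRadial {F : Type*} [NormedAddCommGroup F] (c : ℝ) (S : ℝ[X])
    {x : F} (hx : x ≠ 0) :
    ‖x‖ ^ 2 * logPolyRadial (c - 2) S x = logPolyRadial c S x := by
  have hr : 0 < ‖x‖ := norm_pos_iff.mpr hx
  rw [logPolyRadial, logPolyRadial, Real.rpow_sub hr, Real.rpow_two]
  field_simp

theorem hasDerivAt_rpow_mul_eval_log (c : ℝ) (S : ℝ[X]) {r : ℝ} (hr : 0 < r) :
    HasDerivAt (fun r : ℝ => r ^ c * S.eval (Real.log r))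
      (r ^ (c - 1) * (eulerShift c S).eval (Real.log r)) r := by
  have hpow := Real.hasDerivAt_rpow_const (p := c) (Or.inl hr.ne')
  have hlog := (S.hasDerivAt (Real.log r)).comp r (Real.hasDerivAt_log hr.ne')
  refine (hpow.mul hlog).congr_deriv ?_
  rw [Real.rpow_sub_one hr.ne', eulerShift]
  simp only [Function.comp_apply, eval_add, eval_mul, eval_C]
  field_simp

section InnerProductSpace

variable {F : Type*} [NormedAddCommGroup F] [InnerProductSpace ℝ F]

theorem hasFDerivAt_norm_of_ne_zero {x : F} (hx : x ≠ 0) :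
    HasFDerivAt (fun y : F => ‖y‖) (‖x‖⁻¹ • innerSL ℝ x) x := by
  have hsqrt := (hasStrictFDerivAt_norm_sq x).hasFDerivAt.sqrt (by simpa using hx)
  simp only [Real.sqrt_sq (norm_nonneg _)] at hsqrt
  refine hsqrt.congr_fderiv ?_
  ext v
  simp only [one_div, mul_inv_rev, smul_apply, coe_innerSL_apply, nsmul_eq_mul, Nat.cast_ofNat,
    smul_eq_mul]
  field_simp

theorem hasFDerivAt_logPolyRadial (c : ℝ) (S : ℝ[X]) {x : F} (hx : x ≠ 0) :
    HasFDerivAt (logPolyRadial c S)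
      (logPolyRadial (c - 2) (eulerShift c S) x • innerSL ℝ x) x := by
  have hr : 0 < ‖x‖ := norm_pos_iff.mpr hx
  refine ((hasDerivAt_rpow_mul_eval_log c S hr).comp_hasFDerivAt x
    (hasFDerivAt_norm_of_ne_zero hx)).congr_fderiv ?_
  rw [smul_smul, logPolyRadial, Real.rpow_sub hr, Real.rpow_sub hr, Real.rpow_one, Real.rpow_two]
  congr 1
  field_simp

theorem fderiv_mul_logPolyRadial_apply {h : F → ℝ} {a : ℝ} {P : ℝ[X]} {y : F} (hy : y ≠ 0)
    (hd : DifferentiableAt ℝ h y) (v : F) :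
    fderiv ℝ (fun y => h y * logPolyRadial a P y) y v =
      logPolyRadial a P y * fderiv ℝ h y v
        + h y * logPolyRadial (a - 2) (eulerShift a P) y * inner ℝ y v := by
  rw [(hd.hasFDerivAt.fun_mul (hasFDerivAt_logPolyRadial a P hy)).fderiv]
  simp only [add_apply, smul_apply, smul_eq_mul, innerSL_apply_apply]
  ring

theorem fderiv_fderiv_mul_logPolyRadial_apply {h : F → ℝ} (hh : ContDiff ℝ 2 h) (a : ℝ)
    (P : ℝ[X]) {x : F} (hx : x ≠ 0) (v : F) :
    fderiv ℝ (fun y => fderiv ℝ (fun y => h y * logPolyRadial a P y) y v) x v =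
      logPolyRadial a P x * fderiv ℝ (fun y => fderiv ℝ h y v) x v
        + 2 * logPolyRadial (a - 2) (eulerShift a P) x * (inner ℝ x v * fderiv ℝ h x v)
        + h x * (logPolyRadial (a - 2) (eulerShift a P) x * inner ℝ v v
          + logPolyRadial (a - 2 - 2) (eulerShift (a - 2) (eulerShift a P)) x
            * inner ℝ x v ^ 2) := by
  set Q := eulerShift a P
  have hd : Differentiable ℝ h := hh.differentiable two_ne_zero
  have hev : (fun y => fderiv ℝ (fun y => h y * logPolyRadial a P y) y v) =ᶠ[nhds x]
      fun y => logPolyRadial a P y * fderiv ℝ h y v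
        + h y * logPolyRadial (a - 2) Q y * inner ℝ y v := by
    filter_upwards [isOpen_compl_singleton.mem_nhds hx] with y hy
    exact fderiv_mul_logPolyRadial_apply hy (hd y) v
  have hdv : HasFDerivAt (fun y => fderiv ℝ h y v) (fderiv ℝ (fun y => fderiv ℝ h y v) x) x :=
    (((hh.fderiv_right (m := 1) (by norm_num)).differentiable one_ne_zero x).clm_apply
      (differentiableAt_const v)).hasFDerivAt
  have hinner : HasFDerivAt (fun y : F => inner ℝ y v) (innerSL ℝ v) x :=
    (innerSL ℝ v).hasFDerivAt.congr_of_eventuallyEq (.of_forall fun y => real_inner_comm v y)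
  rw [hev.fderiv_eq, (((hasFDerivAt_logPolyRadial a P hx).fun_mul hdv).fun_add
    (((hd x).hasFDerivAt.fun_mul (hasFDerivAt_logPolyRadial (a - 2) Q hx)).fun_mul
      hinner)).fderiv]
  simp only [add_apply, smul_apply, smul_eq_mul, innerSL_apply_apply, real_inner_comm v x]
  ring

end InnerProductSpace

theorem fderiv_apply_self_of_homogeneous {E : Type*} [NormedAddCommGroup E] [NormedSpace ℝ E]
    {l : ℕ} {h : E → ℝ} {x : E} (hd : DifferentiableAt ℝ h x)
    (hhom : ∀ t : ℝ, 0 < t → h (t • x) = t ^ l * h x) :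
    fderiv ℝ h x x = l * h x := by
  have hray : HasDerivAt (fun t : ℝ => t • x) x 1 := by
    simpa using (hasDerivAt_id (1 : ℝ)).smul_const x
  have hline : HasDerivAt (fun t : ℝ => h (t • x)) (fderiv ℝ h x x) 1 := by
    have hfd : HasFDerivAt h (fderiv ℝ h x) ((1 : ℝ) • x) := by
      rw [one_smul]
      exact hd.hasFDerivAt
    exact hfd.comp_hasDerivAt 1 hray
  have hpow : HasDerivAt (fun t : ℝ => t ^ l * h x) (l * h x) 1 := by
    simpa using (hasDerivAt_pow l (1 : ℝ)).mul_const (h x)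
  have heq : (fun t : ℝ => h (t • x)) =ᶠ[nhds 1] fun t => t ^ l * h x :=
    (eventually_gt_nhds one_pos).mono hhom
  exact hline.unique (hpow.congr_of_eventuallyEq heq)

theorem MvPolynomial.contDiff_eval {ι : Type*} [Fintype ι] {n : WithTop ℕ∞}
    (p : MvPolynomial ι ℝ) : ContDiff ℝ n (fun x : ι → ℝ => MvPolynomial.eval x p) := by
  induction p using MvPolynomial.induction_on with
  | C a => simpa using contDiff_const
  | add p q hp hq => simpa using hp.add hq
  | mul_X p i hp => simpa using hp.mul (contDiff_apply ℝ ℝ i)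

theorem lap_mul_logPolyRadial {D l : ℕ} {h : EuclideanSpace ℝ (Fin D) → ℝ}
    (hh : ContDiff ℝ 2 h)
    (hhom : ∀ t : ℝ, 0 < t → ∀ x, h (t • x) = t ^ l * h x) (a : ℝ) (P : ℝ[X])
    {x : EuclideanSpace ℝ (Fin D)} (hx : x ≠ 0) :
    lap (fun y => h y * logPolyRadial a P y) x =
      logPolyRadial a P x * lap h x
        + h x * logPolyRadial (a - 2) (eulerShift (a + 2 * l + D - 2) (eulerShift a P)) x := by
  set b := EuclideanSpace.basisFun (Fin D) ℝ
  have hb (μ : Fin D) : EuclideanSpace.single μ (1 : ℝ) = b μ :=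
    (EuclideanSpace.basisFun_apply (Fin D) ℝ μ).symm
  have heuler : ∑ μ, inner ℝ x (b μ) * fderiv ℝ h x (b μ) = l * h x :=
    calc ∑ μ, inner ℝ x (b μ) * fderiv ℝ h x (b μ)
        = fderiv ℝ h x (∑ μ, inner ℝ (b μ) x • b μ) := by
          simp only [map_sum, map_smul, smul_eq_mul, real_inner_comm x]
      _ = l * h x := by
          rw [b.sum_repr', fderiv_apply_self_of_homogeneous (hh.differentiable two_ne_zero x)
            (hhom · · x)]
  have hnorm : ∑ μ, inner ℝ x (b μ) ^ 2 = ‖x‖ ^ 2 := by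
    rw [← real_inner_self_eq_norm_sq, ← b.sum_inner_mul_inner x x]
    simp only [sq, real_inner_comm x]
  have hunit : ∑ μ, inner ℝ (b μ) (b μ) = (D : ℝ) := by
    simp [b.orthonormal.1]
  have hsplit : logPolyRadial (a - 2) (eulerShift (a + 2 * l + D - 2) (eulerShift a P)) x =
      (2 * l + D) * logPolyRadial (a - 2) (eulerShift a P) x
        + logPolyRadial (a - 2) (eulerShift (a - 2) (eulerShift a P)) x := by
    simp only [logPolyRadial, eulerShift, eval_add, eval_mul, eval_C]
    ring
  have hsq := norm_sq_mul_logPolyRadial (a - 2) (eulerShift (a - 2) (eulerShift a P)) hx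
  simp only [lap, hb, fderiv_fderiv_mul_logPolyRadial_apply hh a P hx, Finset.sum_add_distrib,
    ← Finset.mul_sum]
  rw [heuler, hnorm, hunit, hsplit, ← hsq]
  ring

theorem stmt11_general {D : ℕ} (l j : ℕ) (k : ℝ)
    (hk1 : k ≠ (l : ℝ) - 2) (hk2 : k ≠ -(l : ℝ) - (D : ℝ)) :
    ∃ p : Polynomial ℝ, p.degree = (j : ℕ) ∧
      ∀ h : EuclideanSpace ℝ (Fin D) → ℝ, IsHarmHom l h →
        ∀ x : EuclideanSpace ℝ (Fin D), x ≠ 0 →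
          lap (fun y => h y * ‖y‖ ^ (k + 2 - (l : ℝ)) * Polynomial.eval (Real.log ‖y‖) p) x
            = h x * ‖x‖ ^ (k - (l : ℝ)) * Real.log ‖x‖ ^ j := by
  have ha : k + 2 - l ≠ 0 := fun ha0 => hk1 (by linarith)
  have hb : k + 2 - l + 2 * l + D - 2 ≠ 0 := fun hb0 => hk2 (by linarith)
  obtain ⟨p, hp⟩ := exists_C_mul_add_C_mul_derivative_add_derivative_eq (mul_ne_zero ha hb)
    (k + 2 - l + (k + 2 - l + 2 * l + D - 2)) (X ^ j)
  have hshift : eulerShift (k + 2 - l + 2 * l + D - 2) (eulerShift (k + 2 - l) p) = X ^ j := by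
    rw [eulerShift_eulerShift, hp]
  refine ⟨p, ?_, fun h ⟨⟨q, hq⟩, hhom, hharm⟩ x hx => ?_⟩
  · rw [← degree_C_mul_add_C_mul_derivative_add_derivative (mul_ne_zero ha hb), hp, degree_X_pow]
  have hh : ContDiff ℝ 2 h := by
    rw [funext hq]
    exact (MvPolynomial.contDiff_eval q).comp (EuclideanSpace.equiv (Fin D) ℝ).contDiff
  have hfun : (fun y => h y * ‖y‖ ^ (k + 2 - (l : ℝ)) * eval (Real.log ‖y‖) p) =
      fun y => h y * logPolyRadial (k + 2 - l) p y :=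
    funext fun y => mul_assoc _ _ _
  rw [hfun, lap_mul_logPolyRadial hh hhom _ p hx, hharm, mul_zero, zero_add, hshift,
    show k + 2 - l - 2 = k - l by ring, logPolyRadial, eval_pow, eval_X, mul_assoc]

/-- non-resonant radial inverse Laplacian: for `k ≠ l − 2` and `k ≠ −l − D`
there is a polynomial `p` of degree exactly `j` such that
`Δ(h(x)·|x|^{k+2−l}·p(log|x|)) = h(x)·|x|^{k−l}·(log|x|)^j` for every harmonic polynomial
`h` homogeneous of degree `l` and every `x ≠ 0`. -/
theorem stmt11 {D : ℕ} (hD : 1 ≤ D) (l j : ℕ) (k : ℝ)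
    (hk1 : k ≠ (l : ℝ) - 2) (hk2 : k ≠ -(l : ℝ) - (D : ℝ)) :
    ∃ p : Polynomial ℝ, p.degree = (j : ℕ) ∧
      ∀ h : EuclideanSpace ℝ (Fin D) → ℝ, IsHarmHom l h →
        ∀ x : EuclideanSpace ℝ (Fin D), x ≠ 0 →
          lap (fun y => h y * ‖y‖ ^ (k + 2 - (l : ℝ)) * Polynomial.eval (Real.log ‖y‖) p) x
            = h x * ‖x‖ ^ (k - (l : ℝ)) * Real.log ‖x‖ ^ j :=
  stmt11_general l j k hk1 hk2
end
end

section
/- Let D ≥ 1, l ∈ ℕ, j ∈ ℕ, and assume 2l + D − 2 ≠ 0. Then there exists a real polynomial p of degree exactly j + 1 such that for every harmonic polynomial h on ℝ^D homogeneous of degree l and every x ∈ ℝ^D with x ≠ 0: Δ( h(x)·p(log|x|) ) = h(x)·|x|^{−2}·(log|x|)^j, where Δ denotes the Euclidean Laplacian Σ_{μ=1}^D ∂²/∂x_μ². -/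
noncomputable section

/-! ### Auxiliary lemmas -/

open Polynomial in
theorem polyExists (c : ℝ) (hc : c ≠ 0) (j : ℕ) :
    ∃ p : Polynomial ℝ, derivative (derivative p) + C c * derivative p = X ^ j ∧
      p.degree = (j + 1 : ℕ) := by
  have hcc : (C c : ℝ[X]) * C c⁻¹ = 1 := by
    rw [← C_mul, mul_inv_cancel₀ hc, C_1]
  induction j with
  | zero =>
    refine ⟨C c⁻¹ * X, ?_, ?_⟩
    · simp only [derivative_C_mul, derivative_X, mul_one, derivative_C, mul_comm]
      simp [← C_mul, mul_inv_cancel₀ hc]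
    · simpa using degree_C_mul_X (inv_ne_zero hc)
  | succ j ih =>
    obtain ⟨q, hq, hdeg⟩ := ih
    have haa : (C ((j:ℝ)+2) : ℝ[X]) * C ((j:ℝ)+2)⁻¹ = 1 := by
      rw [← C_mul, mul_inv_cancel₀ (by positivity), C_1]
    refine ⟨C c⁻¹ * (C ((j:ℝ)+2)⁻¹ * X ^ (j + 2) - C ((j:ℝ)+1) * q), ?_, ?_⟩
    · simp only [derivative_C_mul, derivative_sub, derivative_mul, derivative_C,
        derivative_X_pow, zero_mul, zero_add, mul_zero, sub_zero]
      push_cast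
      linear_combination (-(C c⁻¹ * C ((j:ℝ)+1))) * hq + (X^(j+1) : ℝ[X]) * hcc +
        (C c⁻¹ * C ((j:ℝ)+1) * X^j + C c * C c⁻¹ * X^(j+1)) * haa
    · rw [degree_C_mul (inv_ne_zero hc), degree_sub_eq_left_of_degree_lt, degree_C_mul
        (inv_ne_zero (by positivity)), degree_X_pow]
      calc degree (C ((j:ℝ)+1) * q) ≤ degree q :=
            le_trans (degree_mul_le _ _)
              (by simpa using add_le_add_left (degree_C_le (a := ((j:ℝ)+1))) q.degree)
        _ < (j+2 : ℕ) := by rw [hdeg]; exact_mod_cast WithBot.coe_lt_coe.mpr (by omega)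
        _ = degree (C ((j:ℝ)+2)⁻¹ * X ^ (j+2)) := by
            rw [degree_C_mul (inv_ne_zero (by positivity)), degree_X_pow]

variable {D : ℕ}

private def Qf (y : EuclideanSpace ℝ (Fin D)) : ℝ := ∑ ν, (y ν)^2

private def QD (y : EuclideanSpace ℝ (Fin D)) : EuclideanSpace ℝ (Fin D) →L[ℝ] ℝ :=
  ∑ ν, (2 * y ν) • EuclideanSpace.proj ν

private def LD (y : EuclideanSpace ℝ (Fin D)) : EuclideanSpace ℝ (Fin D) →L[ℝ] ℝ :=
  (2 * Qf y)⁻¹ • QD y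

lemma Qf_eq_norm (y : EuclideanSpace ℝ (Fin D)) : Qf y = ‖y‖^2 := by
  rw [EuclideanSpace.norm_eq, Real.sq_sqrt (by positivity)]
  simp [Qf, sq_abs]

lemma Qf_pos {y : EuclideanSpace ℝ (Fin D)} (hy : y ≠ 0) : 0 < Qf y := by
  have : 0 < ‖y‖ := norm_pos_iff.mpr hy
  rw [Qf_eq_norm]; positivity

lemma hasQD (y : EuclideanSpace ℝ (Fin D)) : HasFDerivAt Qf (QD y) y := by
  apply HasFDerivAt.fun_sum
  intro ν _
  have h1 : HasFDerivAt (fun z : EuclideanSpace ℝ (Fin D) => z ν)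
      (EuclideanSpace.proj (𝕜 := ℝ) ν) y :=
    ((EuclideanSpace.proj ν : EuclideanSpace ℝ (Fin D) →L[ℝ] ℝ)).hasFDerivAt
  simp only [sq]
  refine (h1.fun_mul h1).congr_fderiv ?_
  ext w
  simp [two_mul, add_mul, PiLp.proj_apply]

lemma QD_apply (y : EuclideanSpace ℝ (Fin D)) (μ : Fin D) :
    QD y (EuclideanSpace.single μ 1) = 2 * y μ := by
  simp [QD, EuclideanSpace.single_apply, PiLp.proj_apply]

lemma LD_apply (y : EuclideanSpace ℝ (Fin D)) (μ : Fin D) :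
    LD y (EuclideanSpace.single μ 1) = y μ * (Qf y)⁻¹ := by
  simp [LD, QD_apply, mul_inv]
  ring

lemma log_norm_eq (y : EuclideanSpace ℝ (Fin D)) :
    Real.log ‖y‖ = (1/2) * Real.log (Qf y) := by
  have : ‖y‖ = Real.sqrt (Qf y) := by
    rw [EuclideanSpace.norm_eq]; congr 1; simp [Qf, sq_abs]
  rw [this, Real.log_sqrt (by rw [Qf_eq_norm]; positivity)]
  ring

lemma hasLD {y : EuclideanSpace ℝ (Fin D)} (hy : y ≠ 0) :
    HasFDerivAt (fun z : EuclideanSpace ℝ (Fin D) => Real.log ‖z‖) (LD y) y := by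
  have h1 : HasFDerivAt (fun z : EuclideanSpace ℝ (Fin D) => (1/2) * Real.log (Qf z))
      (LD y) y := by
    have hlog := (Real.hasDerivAt_log (Qf_pos hy).ne').comp_hasFDerivAt y (hasQD y)
    have := hlog.const_mul (1/2 : ℝ)
    refine this.congr_fderiv ?_
    ext w
    simp [LD, mul_inv]
    ring
  exact h1.congr_of_eventuallyEq (by filter_upwards with z using (log_norm_eq z))

lemma contDiff_eval_poly (P : MvPolynomial (Fin D) ℝ) :
    ContDiff ℝ (⊤ : ℕ∞) (fun x : EuclideanSpace ℝ (Fin D) => MvPolynomial.eval (fun ν => x ν) P) := by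
  induction P using MvPolynomial.induction_on with
  | C a => simpa using contDiff_const (c := a)
  | add p q hp hq => simpa using hp.add hq
  | mul_X p ν hp =>
    have hν : ContDiff ℝ (⊤ : ℕ∞) (fun x : EuclideanSpace ℝ (Fin D) => x ν) :=
      (EuclideanSpace.proj ν : EuclideanSpace ℝ (Fin D) →L[ℝ] ℝ).contDiff
    simpa using hp.mul hν

lemma eucl_sum_single (x : EuclideanSpace ℝ (Fin D)) :
    ∑ μ : Fin D, x μ • EuclideanSpace.single μ (1:ℝ) = x := by
  ext ν
  have : (∑ μ : Fin D, x μ • EuclideanSpace.single μ (1:ℝ)) ν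
      = ∑ μ : Fin D, x μ * (EuclideanSpace.single μ (1:ℝ)) ν := by
    rw [WithLp.ofLp_sum, Finset.sum_apply]; rfl
  rw [this]
  simp [EuclideanSpace.single_apply]

lemma euler_id {l : ℕ} {h : EuclideanSpace ℝ (Fin D) → ℝ} (hsm : ContDiff ℝ (⊤ : ℕ∞) h)
    (hom : ∀ t : ℝ, 0 < t → ∀ x, h (t • x) = t ^ l * h x) (x : EuclideanSpace ℝ (Fin D)) :
    fderiv ℝ h x x = l * h x := by
  have hd : HasFDerivAt h (fderiv ℝ h x) ((1:ℝ) • x) := by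
    rw [one_smul]; exact (hsm.differentiable (by simp) x).hasFDerivAt
  have d1 : HasDerivAt (fun t : ℝ => t • x) ((1:ℝ) • x) 1 := (hasDerivAt_id (1:ℝ)).smul_const x
  have d2 : HasDerivAt (fun t : ℝ => h (t • x)) (fderiv ℝ h x x) 1 := by
    simpa [Function.comp_def] using hd.comp_hasDerivAt 1 d1
  have d3 : HasDerivAt (fun t : ℝ => t ^ l * h x) ((l : ℝ) * h x) 1 := by
    simpa using (hasDerivAt_pow l (1:ℝ)).mul_const (h x)
  have heq : (fun t : ℝ => t ^ l * h x) =ᶠ[nhds (1:ℝ)] fun t => h (t • x) := by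
    filter_upwards [eventually_gt_nhds (zero_lt_one)] with t ht
    exact (hom t ht x).symm
  exact (d2.congr_of_eventuallyEq heq).unique d3

open Polynomial in
lemma lap_formula (l : ℕ) (p : Polynomial ℝ) {h : EuclideanSpace ℝ (Fin D) → ℝ}
    (hsm : ContDiff ℝ (⊤ : ℕ∞) h)
    (hom : ∀ t : ℝ, 0 < t → ∀ x, h (t • x) = t ^ l * h x)
    (hharm : ∀ x, lap h x = 0)
    {x : EuclideanSpace ℝ (Fin D)} (hx : x ≠ 0) :
    lap (fun y => h y * Polynomial.eval (Real.log ‖y‖) p) x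
      = h x * (Qf x)⁻¹ *
        Polynomial.eval (Real.log ‖x‖)
          (derivative (derivative p) + C (2*(l:ℝ) + D - 2) * derivative p) := by
  set p1 := derivative p with hp1
  set p2 := derivative p1 with hp2
  have hQx : Qf x ≠ 0 := (Qf_pos hx).ne'
  have hev : ∀ᶠ (y : EuclideanSpace ℝ (Fin D)) in nhds x, y ≠ 0 :=
    eventually_ne_nhds hx
  -- derivative of the radial factor
  have hg : ∀ y : EuclideanSpace ℝ (Fin D), y ≠ 0 →
      HasFDerivAt (fun z : EuclideanSpace ℝ (Fin D) => Polynomial.eval (Real.log ‖z‖) p)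
        ((Polynomial.eval (Real.log ‖y‖) p1) • LD y) y := fun y hy =>
    by have := (Polynomial.hasDerivAt p (Real.log ‖y‖)).comp_hasFDerivAt y (hasLD hy); exact this
  have hg1 : HasFDerivAt (fun z : EuclideanSpace ℝ (Fin D) => Polynomial.eval (Real.log ‖z‖) p1)
      ((Polynomial.eval (Real.log ‖x‖) p2) • LD x) x :=
    by have := (Polynomial.hasDerivAt p1 (Real.log ‖x‖)).comp_hasFDerivAt x (hasLD hx); exact this
  have hdh : ∀ y : EuclideanSpace ℝ (Fin D), HasFDerivAt h (fderiv ℝ h y) y := fun y =>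
    (hsm.differentiable (by simp) y).hasFDerivAt
  have hf : ∀ y : EuclideanSpace ℝ (Fin D), y ≠ 0 →
      HasFDerivAt (fun z => h z * Polynomial.eval (Real.log ‖z‖) p)
        (h y • ((Polynomial.eval (Real.log ‖y‖) p1) • LD y)
          + (Polynomial.eval (Real.log ‖y‖) p) • fderiv ℝ h y) y := fun y hy =>
    (hdh y).mul (hg y hy)
  have key : ∀ μ : Fin D,
      fderiv ℝ (fun y => fderiv ℝ (fun z => h z * Polynomial.eval (Real.log ‖z‖) p) y
          (EuclideanSpace.single μ 1)) x (EuclideanSpace.single μ 1)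
        = Polynomial.eval (Real.log ‖x‖) p *
            (fderiv ℝ (fun y => fderiv ℝ h y (EuclideanSpace.single μ 1)) x
              (EuclideanSpace.single μ 1))
          + (2 * Polynomial.eval (Real.log ‖x‖) p1 * (Qf x)⁻¹) *
              (x μ * fderiv ℝ h x (EuclideanSpace.single μ 1))
          + (h x * Polynomial.eval (Real.log ‖x‖) p2 * ((Qf x)⁻¹ * (Qf x)⁻¹)
              - h x * Polynomial.eval (Real.log ‖x‖) p1 * (2 * ((Qf x)⁻¹ * (Qf x)⁻¹)))
              * (x μ)^2
          + h x * Polynomial.eval (Real.log ‖x‖) p1 * (Qf x)⁻¹ := by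
    intro μ
    have hev2 : (fun y => fderiv ℝ (fun z => h z * Polynomial.eval (Real.log ‖z‖) p) y
          (EuclideanSpace.single μ 1))
        =ᶠ[nhds x] fun y =>
          h y * Polynomial.eval (Real.log ‖y‖) p1 * (y μ * (Qf y)⁻¹)
            + Polynomial.eval (Real.log ‖y‖) p * (fderiv ℝ h y (EuclideanSpace.single μ 1)) := by
      filter_upwards [hev] with y hy
      rw [(hf y hy).fderiv]
      simp [LD_apply, smul_eq_mul]
      ring
    rw [hev2.fderiv_eq]
    -- now differentiate the explicit formula
    have hH : HasFDerivAt (fun y => fderiv ℝ h y (EuclideanSpace.single μ 1))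
        (fderiv ℝ (fun y => fderiv ℝ h y (EuclideanSpace.single μ 1)) x) x := by
      have hc : ContDiff ℝ (⊤ : ℕ∞) (fun y => fderiv ℝ h y (EuclideanSpace.single μ 1)) :=
        (hsm.fderiv_right (mod_cast le_top)).clm_apply contDiff_const
      exact (hc.differentiable (by simp) x).hasFDerivAt
    have hproj : HasFDerivAt (fun z : EuclideanSpace ℝ (Fin D) => z μ)
        (EuclideanSpace.proj (𝕜 := ℝ) μ) x :=
      ((EuclideanSpace.proj μ : EuclideanSpace ℝ (Fin D) →L[ℝ] ℝ)).hasFDerivAt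
    have hinv : HasFDerivAt (fun y : EuclideanSpace ℝ (Fin D) => (Qf y)⁻¹)
        ((-((Qf x)^2)⁻¹) • QD x) x :=
      (hasDerivAt_inv hQx).comp_hasFDerivAt x (hasQD x)
    have hB := hproj.fun_mul hinv
    have hΦ := (((hdh x).fun_mul hg1).fun_mul hB).fun_add ((hg x hx).fun_mul hH)
    rw [hΦ.fderiv]
    simp [LD_apply, QD_apply, PiLp.proj_apply, EuclideanSpace.single_apply,
      smul_eq_mul, mul_inv, sq]
    ring
  have hsum1 : ∑ μ : Fin D,
      fderiv ℝ (fun y => fderiv ℝ h y (EuclideanSpace.single μ 1)) x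
        (EuclideanSpace.single μ 1) = 0 := hharm x
  have hsum2 : ∑ μ : Fin D, x μ * fderiv ℝ h x (EuclideanSpace.single μ 1) = l * h x := by
    have e1 : fderiv ℝ h x x = l * h x := euler_id hsm hom x
    calc ∑ μ : Fin D, x μ * fderiv ℝ h x (EuclideanSpace.single μ 1)
        = fderiv ℝ h x (∑ μ : Fin D, x μ • EuclideanSpace.single μ (1:ℝ)) := by
          rw [map_sum]
          refine Finset.sum_congr rfl fun μ _ => ?_
          rw [map_smul, smul_eq_mul]
      _ = l * h x := by rw [eucl_sum_single]; exact e1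
  have hsum3 : ∑ μ : Fin D, (x μ)^2 = Qf x := rfl
  have hcard : ((Finset.univ : Finset (Fin D)).card : ℝ) = D := by simp
  show (∑ μ : Fin D, fderiv ℝ (fun y => fderiv ℝ (fun z => h z *
      Polynomial.eval (Real.log ‖z‖) p) y (EuclideanSpace.single μ 1)) x
      (EuclideanSpace.single μ 1)) = _
  rw [Finset.sum_congr rfl fun μ _ => key μ]
  rw [Finset.sum_add_distrib, Finset.sum_add_distrib, Finset.sum_add_distrib,
    ← Finset.mul_sum, ← Finset.mul_sum, ← Finset.mul_sum, Finset.sum_const,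
    nsmul_eq_mul, hsum1, hsum2, hsum3, hcard]
  rw [Polynomial.eval_add, Polynomial.eval_mul, Polynomial.eval_C]
  field_simp
  ring

/-- resonant case `k = l − 2` of the radial inverse Laplacian: if
`2l + D − 2 ≠ 0`, there is a polynomial `p` of degree exactly `j + 1` such that
`Δ(h(x)·p(log|x|)) = h(x)·|x|^{−2}·(log|x|)^j` for every harmonic polynomial `h`
homogeneous of degree `l` and every `x ≠ 0`. -/
theorem stmt12 {D : ℕ} (hD : 1 ≤ D) (l j : ℕ)
    (hres : 2 * (l : ℝ) + (D : ℝ) - 2 ≠ 0) :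
    ∃ p : Polynomial ℝ, p.degree = ((j + 1 : ℕ) : ℕ) ∧
      ∀ h : EuclideanSpace ℝ (Fin D) → ℝ, IsHarmHom l h →
        ∀ x : EuclideanSpace ℝ (Fin D), x ≠ 0 →
          lap (fun y => h y * Polynomial.eval (Real.log ‖y‖) p) x
            = h x * ‖x‖ ^ (-2 : ℝ) * Real.log ‖x‖ ^ j := by
  obtain ⟨p, hode, hdeg⟩ := polyExists (2*(l:ℝ) + D - 2) hres j
  refine ⟨p, hdeg, ?_⟩
  intro h hh x hx
  obtain ⟨⟨P, hP⟩, hom, hharm⟩ := hh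
  have hsm : ContDiff ℝ (⊤ : ℕ∞) h := by
    rw [show h = fun x => MvPolynomial.eval (fun ν => x ν) P from funext hP]
    exact contDiff_eval_poly P
  rw [lap_formula l p hsm hom hharm hx, hode, Polynomial.eval_pow, Polynomial.eval_X]
  have hnorm : ‖x‖ ^ (-2 : ℝ) = (Qf x)⁻¹ := by
    rw [Qf_eq_norm, show ((-2:ℝ)) = -((2:ℕ):ℝ) by norm_num,
      Real.rpow_neg (norm_nonneg x), Real.rpow_natCast]
  rw [hnorm]
end
end

section
/- Let D ≥ 1, l ∈ ℕ, j ∈ ℕ, and assume 2l + D − 2 ≠ 0. Then there exists a real polynomial p of degree exactly j + 1 such that for every harmonic polynomial h on ℝ^D homogeneous of degree l and every x ∈ ℝ^D with x ≠ 0: Δ( h(x)·|x|^{2−2l−D}·p(log|x|) ) = h(x)·|x|^{−2l−D}·(log|x|)^j, where Δ denotes the Euclidean Laplacian Σ_{μ=1}^D ∂²/∂x_μ². -/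
noncomputable section

open Polynomial
set_option maxHeartbeats 1000000
theorem odePoly (a : ℝ) (ha : a ≠ 0) (j : ℕ) :
    ∃ p : Polynomial ℝ, p.degree = (j + 1 : ℕ) ∧
      C a * p.derivative + p.derivative.derivative = X ^ j := by
  induction j with
  | zero =>
    refine ⟨C a⁻¹ * X, ?_, ?_⟩
    · rw [degree_C_mul_X (inv_ne_zero ha)]
      rfl
    · rw [derivative_C_mul, derivative_X, mul_one, derivative_C, add_zero, ← C_mul,
        mul_inv_cancel₀ ha, pow_zero, ← C_1]
  | succ n ih =>
    obtain ⟨q, hqdeg, hq⟩ := ih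
    have hne : ((n : ℝ) + 2) ≠ 0 := by positivity
    have hc : ((a * (n + 2))⁻¹ : ℝ) ≠ 0 := inv_ne_zero (mul_ne_zero ha hne)
    have hdlt : degree (-(C ((n + 1 : ℝ) / a) * q)) < degree (C ((a * (n+2))⁻¹ : ℝ) * X ^ (n + 2)) := by
      rw [degree_neg, degree_C_mul_X_pow (n+2) hc]
      calc degree (C ((n + 1 : ℝ) / a) * q) ≤ degree (C ((n + 1 : ℝ) / a)) + q.degree :=
            degree_mul_le _ _
      _ ≤ 0 + q.degree := by gcongr; exact degree_C_le
      _ = q.degree := zero_add _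
      _ < ((n + 2 : ℕ) : WithBot ℕ) := by rw [hqdeg]; exact_mod_cast Nat.lt_succ_self _
    refine ⟨C (a * (n + 2))⁻¹ * X ^ (n + 2) - C ((n + 1) / a) * q, ?_, ?_⟩
    · rw [sub_eq_add_neg, degree_add_eq_left_of_degree_lt hdlt, degree_C_mul_X_pow (n+2) hc]
    · have hA : C a * (C ((a * ((n:ℝ) + 2))⁻¹) * C (((n:ℕ)+2 : ℕ) : ℝ)) = 1 := by
        rw [← C_mul, ← C_mul, ← C_1]
        congr 1
        push_cast
        field_simp
      have hB : C ((a * ((n:ℝ) + 2))⁻¹) * C (((n:ℕ)+2 : ℕ) : ℝ) * C (((n:ℕ)+1 : ℕ) : ℝ)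
          = C (((n:ℝ) + 1) / a) := by
        rw [← C_mul, ← C_mul]
        congr 1
        push_cast
        field_simp
      simp only [derivative_sub, derivative_C_mul, derivative_X_pow]
      show C a * (C ((a * ((n:ℝ)+2))⁻¹) * (C (((n:ℕ)+2 : ℕ) : ℝ) * X ^ (n+1)) - C (((n:ℝ)+1)/a) * derivative q)
        + (C ((a * ((n:ℝ)+2))⁻¹) * (C (((n:ℕ)+2 : ℕ):ℝ) * (C (((n:ℕ)+1 : ℕ):ℝ) * X ^ n)) - C (((n:ℝ)+1)/a) * derivative (derivative q))
        = X ^ (n+1)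
      linear_combination X^(n+1) * hA - C (((n:ℝ)+1)/a) * hq + X^n * hB



abbrev E (D : ℕ) := EuclideanSpace ℝ (Fin D)

def ee (μ : Fin D) : E D := EuclideanSpace.single μ 1

/-- squared norm as a sum of squares -/
def NN (y : E D) : ℝ := ∑ μ : Fin D, y μ ^ 2

lemma NN_eq (y : E D) : NN y = ‖y‖ ^ 2 := by
  rw [EuclideanSpace.norm_eq, Real.sq_sqrt]
  · simp [NN, sq_abs]
  · positivity

lemma NN_pos {y : E D} (hy : y ≠ 0) : 0 < NN y := by
  rw [NN_eq]
  exact pow_pos (norm_pos_iff.mpr hy) 2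

lemma sum_single (x : E D) : ∑ μ : Fin D, x μ • ee μ = x := by
  have := (EuclideanSpace.basisFun (Fin D) ℝ).sum_repr x
  simpa [EuclideanSpace.basisFun_apply, EuclideanSpace.basisFun_repr, ee] using this

lemma proj_ee (μ ν : Fin D) : (EuclideanSpace.single μ (1:ℝ)) ν = if μ = ν then 1 else 0 := by
  simp [EuclideanSpace.single_apply, eq_comm]

lemma contDiff_of_harm {l : ℕ} {h : E D → ℝ} (hh : IsHarmHom l h) : ContDiff ℝ (⊤ : ℕ∞) h := by
  obtain ⟨⟨P, hP⟩, -, -⟩ := hh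
  have : h = fun x : E D => MvPolynomial.eval (fun μ => x μ) P := funext hP
  rw [this]
  clear hP this
  induction P using MvPolynomial.induction_on with
  | C a => simpa using contDiff_const
  | add p q hp hq => simpa [MvPolynomial.eval_add] using hp.add hq
  | mul_X p ν hp =>
      simp only [MvPolynomial.eval_mul, MvPolynomial.eval_X]
      exact hp.mul ((EuclideanSpace.proj ν : E D →L[ℝ] ℝ).contDiff)

/-- derivative of the squared norm -/
lemma hasFDerivAt_NN (y : E D) :
    HasFDerivAt NN (∑ μ : Fin D, (2 * y μ) • (EuclideanSpace.proj μ : E D →L[ℝ] ℝ)) y := by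
  have : ∀ μ : Fin D, HasFDerivAt (fun z : E D => z μ ^ 2)
      ((2 * y μ) • (EuclideanSpace.proj μ : E D →L[ℝ] ℝ)) y := by
    intro μ
    have hp : HasFDerivAt (fun z : E D => z μ) (EuclideanSpace.proj μ : E D →L[ℝ] ℝ) y :=
      (EuclideanSpace.proj μ : E D →L[ℝ] ℝ).hasFDerivAt
    have heq : (fun z : E D => z μ ^ 2) = fun z => z μ * z μ := by
      funext z; ring
    rw [heq]
    have := hp.fun_mul hp
    refine this.congr_fderiv (Eq.symm ?_)
    ext v
    simp [two_mul]
    ring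
  exact HasFDerivAt.fun_sum (fun μ _ => this μ)

lemma euler {l : ℕ} {h : E D → ℝ} (hh : IsHarmHom l h) (x : E D) :
    fderiv ℝ h x x = l * h x := by
  have hcd := contDiff_of_harm hh
  obtain ⟨-, hom, -⟩ := hh
  have h1 : HasDerivAt (fun t : ℝ => t • x) x 1 := by
    simpa using (hasDerivAt_id (1:ℝ)).smul_const x
  have hdh : HasFDerivAt h (fderiv ℝ h x) x :=
    (hcd.differentiable (by simp) x).hasFDerivAt
  have hdh' : HasFDerivAt h (fderiv ℝ h x) ((1:ℝ) • x) := by rwa [one_smul]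
  have hd : HasDerivAt (fun t : ℝ => h (t • x)) (fderiv ℝ h x x) 1 := by
    simpa [Function.comp_def] using hdh'.comp_hasDerivAt (x := (1:ℝ)) h1
  have he : (fun t : ℝ => h (t • x)) =ᶠ[nhds (1:ℝ)] fun t => t ^ l * h x := by
    have hmem : ∀ᶠ t in nhds (1:ℝ), t ∈ Set.Ioi (0:ℝ) :=
      isOpen_Ioi.eventually_mem (by norm_num : (1:ℝ) ∈ Set.Ioi 0)
    filter_upwards [hmem] with t ht
    exact hom t ht x
  have hd2 : HasDerivAt (fun t : ℝ => t ^ l * h x) (l * h x) 1 := by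
    simpa using (hasDerivAt_pow l (1:ℝ)).mul_const (h x)
  have hd2' : HasDerivAt (fun t : ℝ => h (t • x)) (l * h x) 1 := hd2.congr_of_eventuallyEq he
  exact hd.unique hd2'

lemma euler_sum {l : ℕ} {h : E D → ℝ} (hh : IsHarmHom l h) (x : E D) :
    ∑ μ : Fin D, x μ * fderiv ℝ h x (ee μ) = l * h x := by
  have := euler hh x
  rw [← this]
  have : (fderiv ℝ h x) x = (fderiv ℝ h x) (∑ μ : Fin D, x μ • ee μ) := by rw [sum_single x]
  rw [this, map_sum]
  simp [smul_eq_mul]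

def LN (y : E D) : E D →L[ℝ] ℝ := ∑ μ : Fin D, (2 * y μ) • (EuclideanSpace.proj μ : E D →L[ℝ] ℝ)

lemma LN_apply (y : E D) (ν : Fin D) : LN y (ee ν) = 2 * y ν := by
  simp only [LN, ContinuousLinearMap.coe_sum', Finset.sum_apply,
    ContinuousLinearMap.coe_smul', Pi.smul_apply, smul_eq_mul]
  rw [Finset.sum_eq_single ν]
  · simp [ee, EuclideanSpace.single_apply]
  · intro b _ hb
    have : (EuclideanSpace.proj b : E D →L[ℝ] ℝ) (ee ν) = 0 := by
      simp [ee, EuclideanSpace.single_apply, hb]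
    rw [this, mul_zero]
  · simp

lemma lap_radial {l : ℕ} {h : E D → ℝ} (hh : IsHarmHom l h)
    (φ φ' φ'' : ℝ → ℝ)
    (hφ : ∀ u, 0 < u → HasDerivAt φ (φ' u) u)
    (hφ2 : ∀ u, 0 < u → HasDerivAt φ' (φ'' u) u)
    (x : E D) (hx : x ≠ 0) :
    lap (fun y => h y * φ (NN y)) x
      = h x * ((4 * l + 2 * D) * φ' (NN x) + 4 * NN x * φ'' (NN x)) := by
  have hcd := contDiff_of_harm hh
  set dH : Fin D → E D → ℝ := fun μ y => fderiv ℝ h y (ee μ) with hdH_def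
  have hdH_cd : ∀ μ, ContDiff ℝ (⊤ : ℕ∞) (dH μ) := fun μ =>
    (ContinuousLinearMap.apply ℝ ℝ (ee μ)).contDiff.comp (hcd.fderiv_right (mod_cast le_top))
  -- first derivative of F on the complement of 0
  have hφN : ∀ y : E D, y ≠ 0 → HasFDerivAt (fun z => φ (NN z)) (φ' (NN y) • LN y) y :=
    fun y hy => (hφ _ (NN_pos hy)).comp_hasFDerivAt y (hasFDerivAt_NN y)
  have hφ'N : ∀ y : E D, y ≠ 0 → HasFDerivAt (fun z => φ' (NN z)) (φ'' (NN y) • LN y) y :=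
    fun y hy => (hφ2 _ (NN_pos hy)).comp_hasFDerivAt y (hasFDerivAt_NN y)
  have hF : ∀ y : E D, y ≠ 0 → HasFDerivAt (fun z => h z * φ (NN z))
      (h y • (φ' (NN y) • LN y) + φ (NN y) • fderiv ℝ h y) y := fun y hy =>
    ((hcd.differentiable (by simp) y).hasFDerivAt).fun_mul (hφN y hy)
  -- expression of the first partials away from 0
  have hGev : ∀ ν : Fin D, (fun y => fderiv ℝ (fun z => h z * φ (NN z)) y (ee ν)) =ᶠ[nhds x]
      (fun y => h y * φ' (NN y) * (2 * y ν) + φ (NN y) * dH ν y) := by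
    intro ν
    filter_upwards [isOpen_compl_singleton.mem_nhds hx] with y hy
    rw [(hF y (by simpa using hy)).fderiv]
    simp only [ContinuousLinearMap.add_apply, ContinuousLinearMap.smul_apply, smul_eq_mul,
      LN_apply, hdH_def]
    ring
  -- second partials
  have key : ∀ ν : Fin D, fderiv ℝ (fun y => fderiv ℝ (fun z => h z * φ (NN z)) y (ee ν)) x (ee ν)
      = ((h x * φ' (NN x)) * 2 + (2 * x ν) * (h x * (φ'' (NN x) * (2 * x ν)) + φ' (NN x) * dH ν x))
        + (φ (NN x) * (fderiv ℝ (dH ν) x (ee ν)) + dH ν x * (φ' (NN x) * (2 * x ν))) := by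
    intro ν
    rw [(hGev ν).fderiv_eq]
    have hA : HasFDerivAt (fun y : E D => h y * φ' (NN y))
        (h x • (φ'' (NN x) • LN x) + φ' (NN x) • fderiv ℝ h x) x :=
      ((hcd.differentiable (by simp) x).hasFDerivAt).fun_mul (hφ'N x hx)
    have hB : HasFDerivAt (fun y : E D => 2 * y ν)
        ((2:ℝ) • (EuclideanSpace.proj ν : E D →L[ℝ] ℝ)) x :=
      (EuclideanSpace.proj ν : E D →L[ℝ] ℝ).hasFDerivAt.const_mul 2
    have hAB := hA.fun_mul hB
    have hD : HasFDerivAt (dH ν) (fderiv ℝ (dH ν) x) x :=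
      (((hdH_cd ν).differentiable (by simp)) x).hasFDerivAt
    have hCD := (hφN x hx).fun_mul hD
    have htot := hAB.fun_add hCD
    rw [htot.fderiv]
    have hproj : (EuclideanSpace.proj ν : E D →L[ℝ] ℝ) (ee ν) = 1 := by
      simp [ee, EuclideanSpace.single_apply]
    simp only [ContinuousLinearMap.add_apply, ContinuousLinearMap.smul_apply, smul_eq_mul,
      LN_apply, hproj, hdH_def]
    ring
  -- sum up
  have hlap0 : ∑ ν : Fin D, fderiv ℝ (dH ν) x (ee ν) = 0 := by
    have := hh.2.2 x
    simpa [lap, hdH_def, ee] using this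
  have heuler := euler_sum hh x
  rw [lap]
  have : ∀ ν : Fin D, (EuclideanSpace.single ν (1:ℝ)) = ee ν := fun ν => rfl
  simp only [this]
  rw [Finset.sum_congr rfl (fun ν _ => key ν)]
  rw [Finset.sum_add_distrib, Finset.sum_add_distrib]
  simp only [Finset.sum_const, Finset.card_univ, Fintype.card_fin, nsmul_eq_mul]
  have e1 : ∑ ν : Fin D, (2 * x ν) * (h x * (φ'' (NN x) * (2 * x ν)) + φ' (NN x) * dH ν x)
      = 4 * h x * φ'' (NN x) * NN x + 2 * φ' (NN x) * (l * h x) := by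
    rw [← heuler]
    rw [Finset.mul_sum, NN, Finset.mul_sum, ← Finset.sum_add_distrib]
    apply Finset.sum_congr rfl
    intro ν _
    ring
  have e2 : ∑ ν : Fin D, (φ (NN x) * (fderiv ℝ (dH ν) x (ee ν)) + dH ν x * (φ' (NN x) * (2 * x ν)))
      = 2 * φ' (NN x) * (l * h x) := by
    rw [Finset.sum_add_distrib, ← Finset.mul_sum, hlap0, mul_zero, zero_add, ← heuler,
      Finset.mul_sum]
    apply Finset.sum_congr rfl
    intro ν _
    ring
  rw [e1, e2]
  ring

lemma lap_congr (f g : E D → ℝ) (x : E D) (hx : x ≠ 0)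
    (hfg : ∀ y : E D, y ≠ 0 → f y = g y) : lap f x = lap g x := by
  unfold lap
  apply Finset.sum_congr rfl
  intro μ _
  have hev : (fun y => fderiv ℝ f y (EuclideanSpace.single μ 1))
      =ᶠ[nhds x] (fun y => fderiv ℝ g y (EuclideanSpace.single μ 1)) := by
    filter_upwards [isOpen_compl_singleton.mem_nhds hx] with y hy
    have hyy : (y : E D) ≠ 0 := by simpa using hy
    have hev2 : f =ᶠ[nhds y] g := by
      filter_upwards [isOpen_compl_singleton.mem_nhds hyy] with z hz
      exact hfg z (by simpa using hz)
    rw [hev2.fderiv_eq]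
  rw [hev.fderiv_eq]

lemma hasDerivAt_aux (b : ℝ) (P : ℝ[X]) {u : ℝ} (hu : 0 < u) :
    HasDerivAt (fun v : ℝ => v ^ b * P.eval (Real.log v / 2))
      (u ^ (b-1) * ((C b * P + C (2⁻¹:ℝ) * P.derivative).eval (Real.log u / 2))) u := by
  have h1 : HasDerivAt (fun v : ℝ => v ^ b) (b * u ^ (b-1)) u :=
    Real.hasDerivAt_rpow_const (Or.inl hu.ne')
  have h2 : HasDerivAt (fun v : ℝ => Real.log v / 2) (u⁻¹ / 2) u :=
    (Real.hasDerivAt_log hu.ne').div_const 2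
  have h3 : HasDerivAt (fun v : ℝ => P.eval (Real.log v / 2))
      (P.derivative.eval (Real.log u / 2) * (u⁻¹ / 2)) u :=
    by have := (Polynomial.hasDerivAt P (Real.log u / 2)).comp u h2; exact this
  have hmul := h1.fun_mul h3
  refine hmul.congr_deriv (Eq.symm ?_)
  have hub : u ^ b = u ^ (b-1) * u := by
    rw [← Real.rpow_add_one hu.ne', sub_add_cancel]
  simp only [Polynomial.eval_add, Polynomial.eval_mul, Polynomial.eval_C]
  rw [hub]
  field_simp


/-- resonant case `k = −l − D` of the radial inverse Laplacian: if
`2l + D − 2 ≠ 0`, there is a polynomial `p` of degree exactly `j + 1` such that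
`Δ(h(x)·|x|^{2−2l−D}·p(log|x|)) = h(x)·|x|^{−2l−D}·(log|x|)^j` for every harmonic
polynomial `h` homogeneous of degree `l` and every `x ≠ 0`. -/
theorem stmt13 {D : ℕ} (hD : 1 ≤ D) (l j : ℕ)
    (hres : 2 * (l : ℝ) + (D : ℝ) - 2 ≠ 0) :
    ∃ p : Polynomial ℝ, p.degree = ((j + 1 : ℕ) : ℕ) ∧
      ∀ h : EuclideanSpace ℝ (Fin D) → ℝ, IsHarmHom l h →
        ∀ x : EuclideanSpace ℝ (Fin D), x ≠ 0 →
          lap (fun y => h y * ‖y‖ ^ ((2 : ℝ) - 2 * (l : ℝ) - (D : ℝ))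
              * Polynomial.eval (Real.log ‖y‖) p) x
            = h x * ‖x‖ ^ (-(2 * (l : ℝ)) - (D : ℝ)) * Real.log ‖x‖ ^ j := by
  set a : ℝ := 2 - 2 * (l:ℝ) - (D:ℝ) with ha_def
  have ha : a ≠ 0 := by
    intro h0
    apply hres
    rw [ha_def] at h0
    linarith
  obtain ⟨p, hpdeg, hODE⟩ := odePoly a ha j
  refine ⟨p, hpdeg, ?_⟩
  intro h hh x hx
  set Q1 : ℝ[X] := C (a/2) * p + C (2⁻¹:ℝ) * p.derivative with hQ1
  set Q2 : ℝ[X] := C (a/2 - 1) * Q1 + C (2⁻¹:ℝ) * Q1.derivative with hQ2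
  have hφ : ∀ u, 0 < u → HasDerivAt (fun u => u ^ (a/2) * p.eval (Real.log u / 2))
      ((fun u => u ^ (a/2 - 1) * Q1.eval (Real.log u / 2)) u) u :=
    fun u hu => hasDerivAt_aux (a/2) p hu
  have hφ2 : ∀ u, 0 < u → HasDerivAt (fun u => u ^ (a/2 - 1) * Q1.eval (Real.log u / 2))
      ((fun u => u ^ (a/2 - 1 - 1) * Q2.eval (Real.log u / 2)) u) u :=
    fun u hu => hasDerivAt_aux (a/2 - 1) Q1 hu
  have hcongr : lap (fun y => h y * ‖y‖ ^ a * p.eval (Real.log ‖y‖)) x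
      = lap (fun y => h y * ((fun u => u ^ (a/2) * p.eval (Real.log u / 2)) (NN y))) x := by
    apply lap_congr _ _ x hx
    intro y hy
    have hny : NN y = ‖y‖ ^ 2 := NN_eq y
    have h1 : (NN y) ^ (a/2) = ‖y‖ ^ a := by
      rw [hny, ← Real.rpow_natCast ‖y‖ 2, ← Real.rpow_mul (norm_nonneg y)]
      congr 1
      push_cast
      ring
    have h2 : Real.log (NN y) / 2 = Real.log ‖y‖ := by
      rw [hny, Real.log_pow]
      push_cast
      ring
    simp only [h1, h2]
    ring
  rw [hcongr, lap_radial hh _ _ _ hφ hφ2 x hx]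
  -- scalar endgame
  have hu : (0:ℝ) < NN x := NN_pos hx
  set u : ℝ := NN x with hu_def
  set s : ℝ := Real.log ‖x‖ with hs_def
  have hsu : Real.log u / 2 = s := by
    rw [hu_def, NN_eq x, Real.log_pow, hs_def]
    push_cast
    ring
  have heval : a * p.derivative.eval s + p.derivative.derivative.eval s = s ^ j := by
    have := congrArg (Polynomial.eval s) hODE
    simpa using this
  have hQ1e : Q1.eval s = a/2 * p.eval s + 2⁻¹ * p.derivative.eval s := by
    simp [hQ1]
  have hQ1d : Q1.derivative = C (a/2) * p.derivative + C (2⁻¹:ℝ) * p.derivative.derivative := by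
    rw [hQ1]
    simp [derivative_C_mul]
  have hQ2e : Q2.eval s = (a/2 - 1) * Q1.eval s
      + 2⁻¹ * (a/2 * p.derivative.eval s + 2⁻¹ * p.derivative.derivative.eval s) := by
    rw [hQ2, hQ1d]
    simp
  have hld : 4 * (l:ℝ) + 2 * (D:ℝ) = 4 - 2 * a := by
    rw [ha_def]; ring
  have hxnorm : ‖x‖ ^ (-(2 * (l:ℝ)) - (D:ℝ)) = u ^ (a/2 - 1) := by
    rw [hu_def, NN_eq x, ← Real.rpow_natCast ‖x‖ 2, ← Real.rpow_mul (norm_nonneg x)]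
    congr 1
    rw [ha_def]
    push_cast
    ring
  have hu1 : u * u ^ (a/2 - 1 - 1) = u ^ (a/2 - 1) := by
    rw [mul_comm, ← Real.rpow_add_one hu.ne']
    congr 1
    ring
  simp only [hsu, hxnorm]
  rw [hld, hQ2e, hQ1e]
  linear_combination (h x * u ^ (a/2 - 1)) * heval
    + (4 * h x * ((a/2 - 1) * (a/2 * p.eval s + 2⁻¹ * p.derivative.eval s)
      + 2⁻¹ * (a/2 * p.derivative.eval s + 2⁻¹ * p.derivative.derivative.eval s))) * hu1
end
end
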